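/- arXiv:1507.03869 — 5 statements merged into one kernel-verified Lean document; each statement's English description precedes it below -/
import Mathlib

section
/- Let p ≠ 2 be a prime with p | D and p² ∤ D, and let l ≥ 1 be an integer such that p^{l+1} divides none of A, B, A−B, G(A,B). Suppose t = (t0,t1,t2,t3,t4) ∈ ℤ⁵ has at least one coordinate not divisible by p and satisfies Q1(t) ≡ 0 (mod p^{8l+1}) and Q2(t) ≡ 0 (mod p^{8l+1}). Then p^{4l+1} does not divide all 2×2 minors of the Jacobian matrix J = [[t1, t0, −2t2, 2D·t3, 0], [2t0+(A+B)t1, (A+B)t0+2AB·t1, −2t2, 0, 2D·t4]]; that is, some 2×2 minor (determinant of a 2×2 submatrix) of J is not divisible by p^{4l+1}. -/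
/-- The Jacobian matrix of the system `(Q1, Q2)` at the point `t`. -/
def jacobianBSD (D A B : ℤ) (t : Fin 5 → ℤ) : Matrix (Fin 2) (Fin 5) ℤ :=
  !![t 1, t 0, -2 * t 2, 2 * D * t 3, 0;
     2 * t 0 + (A + B) * t 1, (A + B) * t 0 + 2 * A * B * t 1, -2 * t 2, 0, 2 * D * t 4]

/-!
Suppose every `2 × 2` minor of `J` is divisible by `p ^ (4l+1)`. Removing the unit `2` and the
factor `D` (of valuation exactly one), the minors give `A B t₁² ≡ t₀²`,
`t₂ (2t₀ + (A+B-1) t₁) ≡ 0` modulo `p ^ (4l+1)`, and `t₃ s₁ ≡ t₃ s₂ ≡ t₁ t₄ ≡ t₀ t₄ ≡ 0`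
modulo `p ^ 4l`, where `s₁ = 2t₀ + (A+B) t₁`, `s₂ = (A+B) t₀ + 2AB t₁`. Two identities drive
the argument: `(A-B)² t₁ = (A+B) s₁ - 2 s₂` and `G t₁² = u (u - 4t₀) - 4 (A B t₁² - t₀²)` with
`u = 2t₀ + (A+B-1) t₁`.

If `p ∣ t₁`, then `Q₁` and `A B t₁² ≡ t₀²` give `p ∣ t₀, t₂`. A unit `t₃` would force
`v((A-B)² t₁) ≥ 4l`, hence `p² ∣ t₁` and `p² ∣ D t₃²` by `Q₁`; a unit `t₄` would force
`p ^ 4l ∣ t₀, t₁` and `p² ∣ D t₄²` by `Q₂`. Both contradict `v(D) = 1`, so `t` is not primitive.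

If `p ∤ t₁`, then `v(t₀) ≤ l` because `v(A B) ≤ 2l`, and `v((A-B)²) ≤ 2l` forces `v(t₃) ≥ 2l`.
Then `t₂² ≡ t₀ t₁` modulo `p ^ (4l+1)`, so `b = v(t₂)` satisfies `2b = v(t₀) ≤ l`. Now
`v(u) ≥ 4l+1-b` and `v(u - 4t₀) ≥ b`, and the second identity gives `v(G) ≥ 4l+1`.
-/

theorem Prime.pow_dvd_of_dvd_mul_of_not_pow_dvd {α : Type*} [CommMonoidWithZero α]
    [IsCancelMulZero α] {π x y : α} (hπ : Prime π) {s m k : ℕ} (hx : ¬π ^ s ∣ x)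
    (h : π ^ m ∣ x * y) (hk : k + s ≤ m + 1) : π ^ k ∣ y := by
  induction s generalizing x m with
  | zero => simp at hx
  | succ s ih =>
    by_cases hπx : π ∣ x
    · obtain ⟨x, rfl⟩ := hπx
      rcases m with _ | m
      · obtain rfl : k = 0 := by omega
        simp
      · refine ih (x := x) (m := m) (fun hs => hx ?_) ?_ (by omega)
        · rw [pow_succ']
          exact mul_dvd_mul_left π hs
        · rw [pow_succ', mul_assoc] at h
          exact (mul_dvd_mul_iff_left hπ.ne_zero).mp h
    · exact (pow_dvd_pow π (by omega)).trans (hπ.pow_dvd_of_dvd_mul_left m hπx h)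

theorem Prime.not_pow_dvd_mul {α : Type*} [CommMonoidWithZero α] [IsCancelMulZero α]
    {π x y : α} (hπ : Prime π) {a b : ℕ} (hx : ¬π ^ (a + 1) ∣ x) (hy : ¬π ^ (b + 1) ∣ y) :
    ¬π ^ (a + b + 1) ∣ x * y :=
  fun h => hy (hπ.pow_dvd_of_dvd_mul_of_not_pow_dvd hx h (by omega))

theorem Prime.dvd_of_sq_dvd_mul_sq {α : Type*} [CommMonoidWithZero α] [IsCancelMulZero α]
    {π d z : α}
    (hπ : Prime π) (hd : ¬π ^ 2 ∣ d) (h : π ^ 2 ∣ d * z ^ 2) : π ∣ z := by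
  by_contra hz
  exact hd (hπ.pow_dvd_of_dvd_mul_right 2 (fun h' => hz (hπ.dvd_of_dvd_pow h')) h)

theorem dvd_sub_sq_mul_of_dvd {R : Type*} [CommRing R] {d a b x y : R}
    (h₁ : d ∣ 2 * x + (a + b) * y) (h₂ : d ∣ (a + b) * x + 2 * a * b * y) :
    d ∣ (a - b) ^ 2 * y := by
  convert dvd_sub (h₁.mul_left (a + b)) (h₂.mul_left 2) using 1
  ring

theorem dvd_G_mul_sq_of_dvd {R : Type*} [CommRing R] {d a b x y : R}
    (h₁ : d ∣ a * b * y ^ 2 - x ^ 2)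
    (h₂ : d ∣ (2 * x + (a + b - 1) * y) * (2 * x + (a + b - 1) * y - 4 * x)) :
    d ∣ (a ^ 2 - 2 * a * b + b ^ 2 - 2 * a - 2 * b + 1) * y ^ 2 := by
  convert dvd_sub h₂ (h₁.mul_left 4) using 1
  ring

section

variable {π D A B : ℤ} {t : Fin 5 → ℤ}

theorem pow_dvd_of_jacobianBSD_minors (hπ : Prime π) (hπ2 : ¬π ∣ 2) (hD2 : ¬π ^ 2 ∣ D) {n : ℕ}
    (hJ : ∀ i j, π ^ (n + 1) ∣ jacobianBSD D A B t 0 i * jacobianBSD D A B t 1 j -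
      jacobianBSD D A B t 0 j * jacobianBSD D A B t 1 i) :
    π ^ (n + 1) ∣ A * B * t 1 ^ 2 - t 0 ^ 2 ∧
    π ^ (n + 1) ∣ t 2 * (2 * t 0 + (A + B - 1) * t 1) ∧
    π ^ n ∣ t 3 * (2 * t 0 + (A + B) * t 1) ∧
    π ^ n ∣ t 3 * ((A + B) * t 0 + 2 * A * B * t 1) ∧
    π ^ n ∣ t 1 * t 4 ∧ π ^ n ∣ t 0 * t 4 := by
  have h2 (z : ℤ) (h : π ^ (n + 1) ∣ 2 * z) : π ^ (n + 1) ∣ z :=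
    hπ.pow_dvd_of_dvd_mul_left _ hπ2 h
  have h2D (z : ℤ) (h : π ^ (n + 1) ∣ 2 * D * z) : π ^ n ∣ z :=
    hπ.pow_dvd_of_dvd_mul_of_not_pow_dvd
      (fun h' => hD2 (hπ.pow_dvd_of_dvd_mul_left _ hπ2 h')) h le_rfl
  refine ⟨h2 _ ?_, h2 _ ?_, h2D _ ?_, h2D _ ?_, h2D _ ?_, h2D _ ?_⟩
  on_goal 1 => convert hJ 0 1 using 1
  on_goal 2 => convert hJ 0 2 using 1
  on_goal 3 => convert hJ 3 0 using 1
  on_goal 4 => convert hJ 3 1 using 1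
  on_goal 5 => convert hJ 0 4 using 1
  on_goal 6 => convert hJ 1 4 using 1
  all_goals
    simp only [jacobianBSD, Matrix.of_apply, Matrix.cons_val', Matrix.cons_val,
      Matrix.cons_val_zero, Matrix.cons_val_one, Matrix.cons_val_fin_one]
    ring

theorem dvd_t0_and_dvd_t2 (hπ : Prime π) (hD : π ∣ D)
    (hQ1 : π ∣ t 2 ^ 2 - D * t 3 ^ 2 - t 0 * t 1) (h01 : π ∣ A * B * t 1 ^ 2 - t 0 ^ 2)
    (ht1 : π ∣ t 1) : π ∣ t 0 ∧ π ∣ t 2 := by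
  refine ⟨hπ.dvd_of_dvd_pow (n := 2) ?_, hπ.dvd_of_dvd_pow (n := 2) ?_⟩
  · convert dvd_sub ((ht1.pow two_ne_zero).mul_left (A * B)) h01 using 1; ring
  · convert dvd_add (dvd_add hQ1 (hD.mul_right (t 3 ^ 2))) (ht1.mul_left (t 0)) using 1; ring

theorem dvd_t3 (hπ : Prime π) (hD2 : ¬π ^ 2 ∣ D) {l : ℕ} (hl : 1 ≤ l)
    (hAB : ¬π ^ (l + 1) ∣ A - B) (hQ1 : π ^ 2 ∣ t 2 ^ 2 - D * t 3 ^ 2 - t 0 * t 1)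
    (h03 : π ^ (4 * l) ∣ t 3 * (2 * t 0 + (A + B) * t 1))
    (h13 : π ^ (4 * l) ∣ t 3 * ((A + B) * t 0 + 2 * A * B * t 1)) (ht2 : π ∣ t 2) :
    π ∣ t 3 := by
  by_contra ht3
  have hABt1 := dvd_sub_sq_mul_of_dvd (hπ.pow_dvd_of_dvd_mul_left _ ht3 h03)
    (hπ.pow_dvd_of_dvd_mul_left _ ht3 h13)
  rw [sq] at hABt1
  have ht1 : π ^ 2 ∣ t 1 :=
    hπ.pow_dvd_of_dvd_mul_of_not_pow_dvd (hπ.not_pow_dvd_mul hAB hAB) hABt1 (by omega)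
  refine ht3 (hπ.dvd_of_sq_dvd_mul_sq hD2 ?_)
  convert dvd_sub (dvd_sub (pow_dvd_pow_of_dvd ht2 2) (ht1.mul_left (t 0))) hQ1 using 1
  ring

theorem dvd_t4 (hπ : Prime π) (hD2 : ¬π ^ 2 ∣ D) {l : ℕ} (hl : 1 ≤ l)
    (hQ2 : π ^ 2 ∣ t 2 ^ 2 - D * t 4 ^ 2 - (t 0 + A * t 1) * (t 0 + B * t 1))
    (h04 : π ^ (4 * l) ∣ t 1 * t 4) (h14 : π ^ (4 * l) ∣ t 0 * t 4) (ht2 : π ∣ t 2) :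
    π ∣ t 4 := by
  by_contra ht4
  have hπl : π ∣ π ^ (4 * l) := dvd_pow_self π (by omega)
  have ht0 : π ∣ t 0 := hπl.trans (hπ.pow_dvd_of_dvd_mul_right _ ht4 h14)
  have ht1 : π ∣ t 1 := hπl.trans (hπ.pow_dvd_of_dvd_mul_right _ ht4 h04)
  have hprod : π ^ 2 ∣ (t 0 + A * t 1) * (t 0 + B * t 1) := by
    rw [sq]
    exact mul_dvd_mul (dvd_add ht0 (ht1.mul_left A)) (dvd_add ht0 (ht1.mul_left B))
  refine ht4 (hπ.dvd_of_sq_dvd_mul_sq hD2 ?_)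
  convert dvd_sub (dvd_sub (pow_dvd_pow_of_dvd ht2 2) hprod) hQ2 using 1
  ring

theorem not_pow_dvd_t0 (hπ : Prime π) {l : ℕ} (hA : ¬π ^ (l + 1) ∣ A)
    (hB : ¬π ^ (l + 1) ∣ B) (h01 : π ^ (4 * l + 1) ∣ A * B * t 1 ^ 2 - t 0 ^ 2)
    (ht1 : ¬π ∣ t 1) : ¬π ^ (l + 1) ∣ t 0 := by
  intro ht0
  have ht0' : π ^ (l + l + 1) ∣ t 0 ^ 2 :=
    (pow_dvd_pow π (by omega)).trans (pow_mul π (l + 1) 2 ▸ pow_dvd_pow_of_dvd ht0 2)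
  refine hπ.not_pow_dvd_mul hA hB (hπ.pow_dvd_of_dvd_mul_right _
    (fun h : π ∣ t 1 ^ 2 => ht1 (hπ.dvd_of_dvd_pow h)) ?_)
  convert dvd_add ((pow_dvd_pow π (by omega)).trans h01) ht0' using 1
  ring

theorem pow_dvd_t3 (hπ : Prime π) {l : ℕ} (hAB : ¬π ^ (l + 1) ∣ A - B)
    (h03 : π ^ (4 * l) ∣ t 3 * (2 * t 0 + (A + B) * t 1))
    (h13 : π ^ (4 * l) ∣ t 3 * ((A + B) * t 0 + 2 * A * B * t 1)) (ht1 : ¬π ∣ t 1) :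
    π ^ (2 * l) ∣ t 3 := by
  by_contra ht3
  have hABt1 := dvd_sub_sq_mul_of_dvd
    (hπ.pow_dvd_of_dvd_mul_of_not_pow_dvd (k := l + l + 1) ht3 h03 (by omega))
    (hπ.pow_dvd_of_dvd_mul_of_not_pow_dvd (k := l + l + 1) ht3 h13 (by omega))
  rw [sq] at hABt1
  exact hπ.not_pow_dvd_mul hAB hAB (hπ.pow_dvd_of_dvd_mul_right _ ht1 hABt1)

theorem exists_not_pow_succ_dvd_t2 (hπ : Prime π) {l : ℕ} (ht1 : ¬π ∣ t 1)
    (ht0 : ¬π ^ (l + 1) ∣ t 0) (hE : π ^ (l + 1) ∣ t 2 ^ 2 - t 0 * t 1) :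
    ∃ b, ¬π ^ (b + 1) ∣ t 2 ∧ π ^ b ∣ t 0 ∧ 2 * b ≤ l := by
  have key (k : ℕ) (hk : k ≤ l + 1) (h : π ^ k ∣ t 2 ^ 2) : π ^ k ∣ t 0 := by
    refine hπ.pow_dvd_of_dvd_mul_right _ ht1 ?_
    convert dvd_sub h ((pow_dvd_pow π hk).trans hE) using 1
    ring
  have ht2 : t 2 ≠ 0 := fun h => ht0 (key _ le_rfl (by simp [h]))
  have hfin := FiniteMultiplicity.of_prime_left hπ ht2
  set b := multiplicity π (t 2)
  have hb2 : π ^ (2 * b) ∣ t 2 ^ 2 := by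
    rw [pow_mul']
    exact pow_dvd_pow_of_dvd (pow_multiplicity_dvd π (t 2)) 2
  have hb : 2 * b ≤ l := by
    by_contra! hb
    exact ht0 (key _ le_rfl ((pow_dvd_pow π hb).trans hb2))
  exact ⟨b, hfin.not_pow_dvd_of_multiplicity_lt (Nat.lt_succ_self b),
    (pow_dvd_pow π (by omega)).trans (key _ (by omega) hb2), hb⟩

theorem pow_dvd_G (hπ : Prime π) {n b : ℕ} (h01 : π ^ n ∣ A * B * t 1 ^ 2 - t 0 ^ 2)
    (h02 : π ^ n ∣ t 2 * (2 * t 0 + (A + B - 1) * t 1)) (ht1 : ¬π ∣ t 1)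
    (ht2 : ¬π ^ (b + 1) ∣ t 2) (ht0 : π ^ b ∣ t 0) (hb : 2 * b ≤ n) :
    π ^ n ∣ A ^ 2 - 2 * A * B + B ^ 2 - 2 * A - 2 * B + 1 := by
  have hu := hπ.pow_dvd_of_dvd_mul_of_not_pow_dvd (k := n - b) ht2 h02 (by omega)
  have hv : π ^ b ∣ 2 * t 0 + (A + B - 1) * t 1 - 4 * t 0 :=
    dvd_sub ((pow_dvd_pow π (by omega)).trans hu) (ht0.mul_left 4)
  have huv := pow_sub_mul_pow π (by omega : b ≤ n) ▸ mul_dvd_mul hu hv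
  exact hπ.pow_dvd_of_dvd_mul_right _ (fun h => ht1 (hπ.dvd_of_dvd_pow h))
    (dvd_G_mul_sq_of_dvd h01 huv)

end

theorem stmt_0 (D A B : ℤ) (p : ℕ) (hp : p.Prime) (hp2 : p ≠ 2)
    (hpD : (p : ℤ) ∣ D) (hp2D : ¬ ((p : ℤ) ^ 2 ∣ D)) (l : ℕ) (hl : 1 ≤ l)
    (hA : ¬ ((p : ℤ) ^ (l + 1) ∣ A)) (hB : ¬ ((p : ℤ) ^ (l + 1) ∣ B))
    (hAB : ¬ ((p : ℤ) ^ (l + 1) ∣ (A - B)))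
    (hG : ¬ ((p : ℤ) ^ (l + 1) ∣ (A ^ 2 - 2 * A * B + B ^ 2 - 2 * A - 2 * B + 1)))
    (t : Fin 5 → ℤ) (hprim : ∃ i, ¬ ((p : ℤ) ∣ t i))
    (hQ1 : ((p : ℤ) ^ (8 * l + 1)) ∣ ((t 2) ^ 2 - D * (t 3) ^ 2 - t 0 * t 1))
    (hQ2 : ((p : ℤ) ^ (8 * l + 1)) ∣
      ((t 2) ^ 2 - D * (t 4) ^ 2 - (t 0 + A * t 1) * (t 0 + B * t 1))) :
    ∃ i j : Fin 5,
      ¬ ((p : ℤ) ^ (4 * l + 1) ∣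
        (jacobianBSD D A B t 0 i * jacobianBSD D A B t 1 j -
         jacobianBSD D A B t 0 j * jacobianBSD D A B t 1 i)) := by
  by_contra! hJ
  have hπ2 : ¬(p : ℤ) ∣ 2 := fun h =>
    hp2 ((Nat.prime_dvd_prime_iff_eq hp Nat.prime_two).mp (by exact_mod_cast h))
  set π : ℤ := ↑p
  have hπ : Prime π := Nat.prime_iff_prime_int.mp hp
  obtain ⟨h01, h02, h03, h13, h04, h14⟩ := pow_dvd_of_jacobianBSD_minors hπ hπ2 hp2D hJ
  by_cases ht1 : π ∣ t 1
  · obtain ⟨ht0, ht2⟩ := dvd_t0_and_dvd_t2 hπ hpD ((dvd_pow_self π (by omega)).trans hQ1)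
      ((dvd_pow_self π (by omega)).trans h01) ht1
    have hπ8 : π ^ 2 ∣ π ^ (8 * l + 1) := pow_dvd_pow π (by omega)
    have ht3 := dvd_t3 hπ hp2D hl hAB (hπ8.trans hQ1) h03 h13 ht2
    have ht4 := dvd_t4 hπ hp2D hl (hπ8.trans hQ2) h04 h14 ht2
    obtain ⟨i, hi⟩ := hprim
    apply hi
    fin_cases i <;> assumption
  · have hDt3 : π ^ (4 * l + 1) ∣ D * t 3 ^ 2 := by
      rw [show π ^ (4 * l + 1) = π * (π ^ (2 * l)) ^ 2 by ring]
      exact mul_dvd_mul hpD (pow_dvd_pow_of_dvd (pow_dvd_t3 hπ hAB h03 h13 ht1) 2)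
    have hE : π ^ (l + 1) ∣ t 2 ^ 2 - t 0 * t 1 := by
      rw [show t 2 ^ 2 - t 0 * t 1 = (t 2 ^ 2 - D * t 3 ^ 2 - t 0 * t 1) + D * t 3 ^ 2 by ring]
      exact dvd_add ((pow_dvd_pow π (by omega)).trans hQ1)
        ((pow_dvd_pow π (by omega)).trans hDt3)
    obtain ⟨b, ht2, ht0, hb⟩ :=
      exists_not_pow_succ_dvd_t2 hπ ht1 (not_pow_dvd_t0 hπ hA hB h01 ht1) hE
    exact hG ((pow_dvd_pow π (by omega)).trans (pow_dvd_G hπ h01 h02 ht1 ht2 ht0 (by omega)))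
end

section
/- Let D be an integer that is not a perfect square, and let p ≠ 2 be a prime with p ∤ D (so p is unramified in ℚ(√D)). Let A, B be integers with A·B ≠ 0, A ≠ B and G(A,B) ≠ 0. Then there exist a nonzero vector t = (t0,…,t4) ∈ ℚ_p⁵ with Q1(t) = Q2(t) = 0, elements u ∈ {t0, t1} and v ∈ {t0 + A·t1, t0 + B·t1} with u·v ≠ 0, and x, y ∈ ℚ_p such that u·v = x² − D·y². (Equivalently: there is a point of S^(D;A,B)(ℚ_p) at which the Brauer class α evaluates to 0.) -/
/-!
If `D` (resp. `-D`) is a square `s ^ 2` in `ℚ_p`, the point `(s : 0 : s : 1 : 0)`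
(resp. `(s : 0 : 0 : 0 : 1)`) works. Otherwise `p` is inert in `ℚ(√D)` and `p > 3`; we take a point
`(r : 1 : x : y₃ : y₄)` with `r`, `r + A`, `r + B` units, so that `u * v = r + A` is a unit, hence a
norm. It remains to find a common `x` with `x ^ 2 - r` and `x ^ 2 - (r + A) (r + B)` in `D • ℚ_p²`.
Modulo `p` this asks for `ξ` with `ξ ^ 2 - γ` a nonsquare or zero for two given `γ ≠ 0`; it exists
because at most `(p - 1) / 2` values of `ξ` make `ξ ^ 2 - γ` a nonzero square, and Hensel's lemma
lifts it.
-/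

open Finset

namespace FiniteField

variable {F : Type*} [Field F] [Fintype F]

theorem isSquare_mul_of_not_isSquare {a b : F} (ha : ¬IsSquare a) (hb : ¬IsSquare b) :
    IsSquare (a * b) := by
  classical
  have ha₀ : a ≠ 0 := by rintro rfl; exact ha IsSquare.zero
  have hb₀ : b ≠ 0 := by rintro rfl; exact hb IsSquare.zero
  rw [← quadraticChar_one_iff_isSquare (mul_ne_zero ha₀ hb₀), map_mul,
    quadraticChar_neg_one_iff_not_isSquare.mpr ha, quadraticChar_neg_one_iff_not_isSquare.mpr hb]
  norm_num

theorem card_filter_isSquare_sq_sub_le [DecidableEq F] (hF : ringChar F ≠ 2) {γ : F}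
    (hγ : γ ≠ 0) :
    #{ξ | ξ ^ 2 - γ ≠ 0 ∧ IsSquare (ξ ^ 2 - γ)} * 2 ≤ Fintype.card F - 1 := by
  have h2 : (2 : F) ≠ 0 := Ring.two_ne_zero hF
  -- Double counting: if `ξ ^ 2 - γ = s ^ 2` with `s ≠ 0`, the polynomial `w ^ 2 - 2 ξ w + γ` has
  -- the two distinct nonzero roots `ξ ± s`, while a nonzero `w` is a root for only one `ξ`.
  have := card_mul_le_card_mul (fun ξ w : F ↦ w ^ 2 + γ = 2 * ξ * w)
    (s := {ξ | ξ ^ 2 - γ ≠ 0 ∧ IsSquare (ξ ^ 2 - γ)}) (t := univ.erase 0) (m := 2) (n := 1)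
    ?_ ?_
  · simpa [card_erase_of_mem] using this
  · intro ξ hξ
    obtain ⟨hne, s, hs⟩ := (mem_filter.mp hξ).2
    have hs₀ : s ≠ 0 := by rintro rfl; exact hne (by simpa using hs)
    calc 2 = #{ξ + s, ξ - s} := by
          rw [card_pair]
          intro h
          exact hs₀ (by simpa [h2] using (by linear_combination h : 2 * s = 0))
      _ ≤ _ := card_le_card fun w hw ↦ by
        have hw' : w ^ 2 + γ = 2 * ξ * w := by
          rcases mem_insert.mp hw with rfl | hw
          · linear_combination -hs
          · rw [mem_singleton.mp hw]; linear_combination -hs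
        refine mem_filter.mpr ⟨mem_erase.mpr ⟨fun h ↦ hγ ?_, mem_univ w⟩, hw'⟩
        simpa [h] using hw'
  · intro w hw
    rw [card_le_one]
    intro ξ hξ ξ' hξ'
    simp only [bipartiteBelow, mem_filter] at hξ hξ'
    have hw : w ≠ 0 := (mem_erase.mp hw).1
    have := hξ.2.symm.trans hξ'.2
    exact mul_left_cancel₀ h2 (mul_right_cancel₀ hw (by linear_combination this))

theorem exists_not_isSquare_sq_sub (hF : ringChar F ≠ 2) {γ : F} (hγ : γ ≠ 0)
    (h3 : 3 < Fintype.card F) : ∃ ξ : F, ¬IsSquare (ξ ^ 2 - γ) := by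
  classical
  have hS := card_filter_isSquare_sq_sub_le hF hγ
  have hZ : #{ξ : F | ξ ^ 2 = γ} ≤ 2 := by
    have h := quadraticChar_card_sqrts hF γ
    rw [Set.toFinset_ofPred] at h
    rcases quadraticChar_dichotomy hγ with h' | h' <;> rw [h'] at h <;> omega
  obtain ⟨ξ, -, hξ⟩ := exists_mem_notMem_of_card_lt_card
    (s := ({ξ | ξ ^ 2 - γ ≠ 0 ∧ IsSquare (ξ ^ 2 - γ)} : Finset F) ∪ ({ξ | ξ ^ 2 = γ} : Finset F))
    (t := univ) ((card_union_le _ _).trans_lt (by rw [card_univ]; omega))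
  refine ⟨ξ, fun hsq ↦ hξ ?_⟩
  by_cases h : ξ ^ 2 - γ = 0
  · exact mem_union_right _ (mem_filter.mpr ⟨mem_univ ξ, sub_eq_zero.mp h⟩)
  · exact mem_union_left _ (mem_filter.mpr ⟨mem_univ ξ, h, hsq⟩)

theorem exists_not_isSquare_sq_sub_or_sq_eq (hF : ringChar F ≠ 2) {γ₁ γ₂ : F} (hγ₁ : γ₁ ≠ 0)
    (hγ₂ : γ₂ ≠ 0) :
    ∃ ξ : F, (¬IsSquare (ξ ^ 2 - γ₁) ∨ ξ ^ 2 = γ₁) ∧ (¬IsSquare (ξ ^ 2 - γ₂) ∨ ξ ^ 2 = γ₂) := by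
  classical
  have h₁ := card_filter_isSquare_sq_sub_le hF hγ₁
  have h₂ := card_filter_isSquare_sq_sub_le hF hγ₂
  have hpos := Fintype.card_pos (α := F)
  obtain ⟨ξ, -, hξ⟩ := exists_mem_notMem_of_card_lt_card
    (s := ({ξ | ξ ^ 2 - γ₁ ≠ 0 ∧ IsSquare (ξ ^ 2 - γ₁)} : Finset F) ∪
      ({ξ | ξ ^ 2 - γ₂ ≠ 0 ∧ IsSquare (ξ ^ 2 - γ₂)} : Finset F))
    (t := univ) ((card_union_le _ _).trans_lt (by rw [card_univ]; omega))
  simp only [mem_union, mem_filter, mem_univ, true_and, not_or, not_and_or, not_not,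
    sub_eq_zero] at hξ
  exact ⟨ξ, hξ.1.symm, hξ.2.symm⟩

end FiniteField

namespace PadicInt

variable {p : ℕ} [Fact p.Prime]

theorem isUnit_iff_toZMod_ne_zero {u : ℤ_[p]} : IsUnit u ↔ toZMod u ≠ 0 := by
  rw [Ne, ← RingHom.mem_ker, ker_toZMod, IsLocalRing.mem_maximalIdeal, mem_nonunits_iff, not_not]

theorem isSquare_of_isSquare_toZMod (hp : p ≠ 2) {u : ℤ_[p]} (hu : IsUnit u)
    (h : IsSquare (toZMod u)) : IsSquare u := by
  obtain ⟨τ, hτ⟩ := h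
  obtain ⟨a, rfl⟩ := ZMod.ringHom_surjective toZMod τ
  have h2 : (2 : ZMod p) ≠ 0 := Ring.two_ne_zero (by rwa [ZMod.ringChar_zmod_n])
  have ha : toZMod a ≠ 0 := by
    intro ha; rw [ha, mul_zero] at hτ; exact isUnit_iff_toZMod_ne_zero.mp hu hτ
  have hderiv : ‖(2 * a : ℤ_[p])‖ = 1 := isUnit_iff.mp <| isUnit_iff_toZMod_ne_zero.mpr <| by
    rw [map_mul, map_ofNat]; exact mul_ne_zero h2 ha
  have hval : ‖a ^ 2 - u‖ < 1 :=
    not_isUnit_iff.mp (by simp [isUnit_iff_toZMod_ne_zero, hτ, sq])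
  have hF : ‖(Polynomial.X ^ 2 - Polynomial.C u).aeval a‖ <
      ‖(Polynomial.X ^ 2 - Polynomial.C u).derivative.aeval a‖ ^ 2 := by
    have hder : (Polynomial.X ^ 2 - Polynomial.C u).derivative.aeval a = 2 * a := by
      simp [one_add_one_eq_two]
    rw [hder, hderiv]
    simpa using hval
  obtain ⟨z, hz, -⟩ := hensels_lemma hF
  simp only [Polynomial.aeval_sub, Polynomial.coe_aeval_eq_eval, Polynomial.eval_pow,
    Polynomial.eval_X, Polynomial.aeval_C, Algebra.algebraMap_self, RingHom.id_apply] at hz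
  exact ⟨z, by linear_combination -hz⟩

theorem exists_sq_sub_mul_sq_eq (hp : p ≠ 2) {d x c : ℤ_[p]} (hd : ¬IsSquare (toZMod d))
    (h : x ^ 2 = c ∨ ¬IsSquare (toZMod (x ^ 2 - c))) : ∃ y, x ^ 2 - d * y ^ 2 = c := by
  rcases h with h | h
  · exact ⟨0, by simp [h]⟩
  have hdU : IsUnit d := isUnit_iff_toZMod_ne_zero.mpr fun h₀ ↦ hd (h₀ ▸ IsSquare.zero)
  have hwU : IsUnit (x ^ 2 - c) := isUnit_iff_toZMod_ne_zero.mpr fun h₀ ↦ h (h₀ ▸ IsSquare.zero)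
  obtain ⟨s, hs⟩ := isSquare_of_isSquare_toZMod hp (hwU.mul hdU)
    (by rw [map_mul]; exact FiniteField.isSquare_mul_of_not_isSquare h hd)
  obtain ⟨e, he⟩ := hdU.exists_left_inv
  exact ⟨s * e, by linear_combination (d * e ^ 2) * hs - (x ^ 2 - c) * (1 + e * d) * he⟩

theorem exists_sq_sub_mul_sq_eq_of_isUnit (hp : 3 < p) {d c : ℤ_[p]}
    (hd : ¬IsSquare (toZMod d)) (hc : IsUnit c) : ∃ x y, x ^ 2 - d * y ^ 2 = c := by
  have hp2 : p ≠ 2 := by omega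
  obtain ⟨ξ, hξ⟩ := FiniteField.exists_not_isSquare_sq_sub (by rwa [ZMod.ringChar_zmod_n])
    (isUnit_iff_toZMod_ne_zero.mp hc) (by rwa [ZMod.card])
  obtain ⟨x, rfl⟩ := ZMod.ringHom_surjective toZMod ξ
  exact ⟨x, exists_sq_sub_mul_sq_eq hp2 hd (Or.inr (by simpa using hξ))⟩

theorem exists_sq_eq_or_not_isSquare_sq_sub (hp : p ≠ 2) {c₁ c₂ : ℤ_[p]} (hc₁ : IsUnit c₁)
    (hc₂ : IsUnit c₂) (hne : toZMod c₁ ≠ toZMod c₂) {ξ : ZMod p}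
    (hξ₁ : ¬IsSquare (ξ ^ 2 - toZMod c₁) ∨ ξ ^ 2 = toZMod c₁)
    (hξ₂ : ¬IsSquare (ξ ^ 2 - toZMod c₂) ∨ ξ ^ 2 = toZMod c₂) :
    ∃ x : ℤ_[p], (x ^ 2 = c₁ ∨ ¬IsSquare (toZMod (x ^ 2 - c₁))) ∧
      (x ^ 2 = c₂ ∨ ¬IsSquare (toZMod (x ^ 2 - c₂))) := by
  -- When `ξ ^ 2 ≡ cᵢ`, the class of `x ^ 2 - cᵢ` is not determined mod `p`, so `x` is then taken
  -- to be an exact square root of `cᵢ`; this is possible for at most one `i` since `c₁ ≢ c₂`.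
  suffices ∃ x : ℤ_[p], toZMod x ^ 2 = ξ ^ 2 ∧ (ξ ^ 2 = toZMod c₁ → x ^ 2 = c₁) ∧
      (ξ ^ 2 = toZMod c₂ → x ^ 2 = c₂) by
    obtain ⟨x, hx, hx₁, hx₂⟩ := this
    exact ⟨x, hξ₁.symm.imp hx₁ fun h ↦ by simpa [hx] using h,
      hξ₂.symm.imp hx₂ fun h ↦ by simpa [hx] using h⟩
  have sqrt_of_sq_eq {c : ℤ_[p]} (hc : IsUnit c) (h : ξ ^ 2 = toZMod c) :
      ∃ x : ℤ_[p], x ^ 2 = c ∧ toZMod x ^ 2 = ξ ^ 2 := by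
    obtain ⟨x, hx⟩ := isSquare_of_isSquare_toZMod hp hc ⟨ξ, by rw [← h, sq]⟩
    exact ⟨x, by rw [hx, sq], by rw [h, hx, map_mul, sq]⟩
  by_cases h₁ : ξ ^ 2 = toZMod c₁
  · obtain ⟨x, hx, hxξ⟩ := sqrt_of_sq_eq hc₁ h₁
    exact ⟨x, hxξ, fun _ ↦ hx, fun h₂ ↦ absurd (h₁.symm.trans h₂) hne⟩
  by_cases h₂ : ξ ^ 2 = toZMod c₂
  · obtain ⟨x, hx, hxξ⟩ := sqrt_of_sq_eq hc₂ h₂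
    exact ⟨x, hxξ, fun h ↦ absurd h h₁, fun _ ↦ hx⟩
  obtain ⟨x, rfl⟩ := ZMod.ringHom_surjective toZMod ξ
  exact ⟨x, rfl, fun h ↦ absurd h h₁, fun h ↦ absurd h h₂⟩

theorem exists_common_sq_sub_mul_sq_eq (hp : 3 < p) {d c₁ c₂ : ℤ_[p]}
    (hd : ¬IsSquare (toZMod d)) (hc₁ : IsUnit c₁) (hc₂ : IsUnit c₂) :
    ∃ x y₁ y₂, x ^ 2 - d * y₁ ^ 2 = c₁ ∧ x ^ 2 - d * y₂ ^ 2 = c₂ := by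
  have hp2 : p ≠ 2 := by omega
  have hF : ringChar (ZMod p) ≠ 2 := by rwa [ZMod.ringChar_zmod_n]
  suffices ∃ x : ℤ_[p], (x ^ 2 = c₁ ∨ ¬IsSquare (toZMod (x ^ 2 - c₁))) ∧
      (x ^ 2 = c₂ ∨ ¬IsSquare (toZMod (x ^ 2 - c₂))) by
    obtain ⟨x, h₁, h₂⟩ := this
    obtain ⟨y₁, hy₁⟩ := exists_sq_sub_mul_sq_eq hp2 hd h₁
    obtain ⟨y₂, hy₂⟩ := exists_sq_sub_mul_sq_eq hp2 hd h₂
    exact ⟨x, y₁, y₂, hy₁, hy₂⟩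
  by_cases heq : toZMod c₁ = toZMod c₂
  · obtain ⟨ξ, hξ⟩ := FiniteField.exists_not_isSquare_sq_sub hF
      (isUnit_iff_toZMod_ne_zero.mp hc₁) (by rwa [ZMod.card])
    obtain ⟨x, rfl⟩ := ZMod.ringHom_surjective toZMod ξ
    exact ⟨x, Or.inr (by simpa using hξ), Or.inr (by simpa [← heq] using hξ)⟩
  obtain ⟨ξ, hξ₁, hξ₂⟩ := FiniteField.exists_not_isSquare_sq_sub_or_sq_eq hF
    (isUnit_iff_toZMod_ne_zero.mp hc₁) (isUnit_iff_toZMod_ne_zero.mp hc₂)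
  exact exists_sq_eq_or_not_isSquare_sq_sub hp2 hc₁ hc₂ heq hξ₁ hξ₂

end PadicInt

theorem ZMod.three_lt_of_not_isSquare_of_not_isSquare_neg {p : ℕ} [Fact p.Prime] (hp : p ≠ 2)
    {d : ZMod p} (hd : ¬IsSquare d) (hd' : ¬IsSquare (-d)) : 3 < p := by
  have hd₀ : d ≠ 0 := by rintro rfl; exact hd IsSquare.zero
  -- `-1 = (-d) * d / d ^ 2` is a square, so `p % 4 ≠ 3`
  obtain ⟨r, hr⟩ := FiniteField.isSquare_mul_of_not_isSquare hd' hd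
  have hmod := ZMod.exists_sq_eq_neg_one_iff.mp ⟨r / d, by field_simp; linear_combination hr⟩
  have := (Fact.out : p.Prime).two_le
  omega

namespace Padic

variable {p : ℕ} [Fact p.Prime]

theorem isSquare_intCast (hp : p ≠ 2) {n : ℤ} (hn : (n : ZMod p) ≠ 0)
    (h : IsSquare (n : ZMod p)) : IsSquare (n : ℚ_[p]) := by
  have hnU : IsUnit (n : ℤ_[p]) := PadicInt.isUnit_iff_toZMod_ne_zero.mpr (by rwa [map_intCast])
  simpa using (PadicInt.isSquare_of_isSquare_toZMod hp hnU (by rwa [map_intCast])).map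
    PadicInt.Coe.ringHom

theorem exists_point_of_inert (hp : 3 < p) {D : ℤ} (hD : ¬IsSquare (D : ZMod p)) (A B : ℤ) :
    ∃ r x y₃ y₄ a b : ℚ_[p], r + A ≠ 0 ∧ x ^ 2 - D * y₃ ^ 2 = r ∧
      x ^ 2 - D * y₄ ^ 2 = (r + A) * (r + B) ∧ r + A = a ^ 2 - D * b ^ 2 := by
  obtain ⟨r, hr, hrA, hrB⟩ : ∃ r : ℤ_[p], IsUnit r ∧ IsUnit (r + A) ∧ IsUnit (r + B) := by
    obtain ⟨ρ, -, hρ⟩ := Finset.exists_mem_notMem_of_card_lt_card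
      (s := ({0, -(A : ZMod p), -(B : ZMod p)} : Finset (ZMod p))) (t := Finset.univ)
      (Finset.card_le_three.trans_lt (by rwa [Finset.card_univ, ZMod.card]))
    obtain ⟨r, rfl⟩ := ZMod.ringHom_surjective PadicInt.toZMod ρ
    simp only [Finset.mem_insert, Finset.mem_singleton, not_or, ← add_eq_zero_iff_eq_neg] at hρ
    exact ⟨r, by simpa only [PadicInt.isUnit_iff_toZMod_ne_zero, map_add, map_intCast] using hρ⟩
  have hd : ¬IsSquare (PadicInt.toZMod (D : ℤ_[p])) := by rwa [map_intCast]
  obtain ⟨x, y₃, y₄, h₃, h₄⟩ := PadicInt.exists_common_sq_sub_mul_sq_eq hp hd hr (hrA.mul hrB)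
  obtain ⟨a, b, hab⟩ := PadicInt.exists_sq_sub_mul_sq_eq_of_isUnit hp hd hrA
  refine ⟨r, x, y₃, y₄, a, b, ?_, ?_, ?_, ?_⟩
  · exact_mod_cast PadicInt.coe_ne_zero.mpr hrA.ne_zero
  · exact_mod_cast congrArg ((↑) : ℤ_[p] → ℚ_[p]) h₃
  · exact_mod_cast congrArg ((↑) : ℤ_[p] → ℚ_[p]) h₄
  · exact_mod_cast congrArg ((↑) : ℤ_[p] → ℚ_[p]) hab.symm

end Padic

theorem stmt_4_general (D A B : ℤ) (p : ℕ) [Fact p.Prime] (hp2 : p ≠ 2)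
    (hpD : ¬ ((p : ℤ) ∣ D)) :
    ∃ t : Fin 5 → ℚ_[p], t ≠ 0 ∧
      (t 2) ^ 2 - (D : ℚ_[p]) * (t 3) ^ 2 - t 0 * t 1 = 0 ∧
      (t 2) ^ 2 - (D : ℚ_[p]) * (t 4) ^ 2 -
        (t 0 + (A : ℚ_[p]) * t 1) * (t 0 + (B : ℚ_[p]) * t 1) = 0 ∧
      ∃ u v : ℚ_[p],
        (u = t 0 ∨ u = t 1) ∧
        (v = t 0 + (A : ℚ_[p]) * t 1 ∨ v = t 0 + (B : ℚ_[p]) * t 1) ∧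
        u * v ≠ 0 ∧
        ∃ x y : ℚ_[p], u * v = x ^ 2 - (D : ℚ_[p]) * y ^ 2 := by
  have hD : (D : ZMod p) ≠ 0 := by rwa [Ne, ZMod.intCast_zmod_eq_zero_iff_dvd]
  have hD₀ : (D : ℚ_[p]) ≠ 0 := by exact_mod_cast fun h ↦ hD (by simp [h])
  by_cases hsq : IsSquare (D : ZMod p)
  · obtain ⟨s, hs⟩ := Padic.isSquare_intCast hp2 hD hsq
    have hs₀ : s ≠ 0 := by rintro rfl; exact hD₀ (by simpa using hs)
    refine ⟨![s, 0, s, 1, 0], fun h ↦ hs₀ (congrFun h 0), ?_, ?_, s, s, Or.inl rfl,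
      Or.inl (by simp), mul_ne_zero hs₀ hs₀, s, 0, by ring⟩ <;> simp [hs, sq]
  by_cases hsq' : IsSquare (-(D : ZMod p))
  · obtain ⟨s, hs⟩ := Padic.isSquare_intCast hp2 (n := -D) (by simpa) (by simpa)
    have hs₀ : s ≠ 0 := by rintro rfl; exact hD₀ (by simpa using hs)
    refine ⟨![s, 0, 0, 0, 1], fun h ↦ hs₀ (congrFun h 0), ?_, ?_, s, s, Or.inl rfl,
      Or.inl (by simp), mul_ne_zero hs₀ hs₀, 0, 1, ?_⟩ <;> simp [← hs]
  obtain ⟨r, x, y₃, y₄, a, b, hr, h₃, h₄, hab⟩ := Padic.exists_point_of_inert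
    (ZMod.three_lt_of_not_isSquare_of_not_isSquare_neg hp2 hsq hsq') hsq A B
  refine ⟨![r, 1, x, y₃, y₄], fun h ↦ one_ne_zero (congrFun h 1), ?_, ?_, 1, r + A * 1,
    Or.inr rfl, Or.inl rfl, by simpa using hr, a, b, by simpa using hab⟩ <;> simp [h₃, h₄]

theorem stmt_4 (D A B : ℤ) (p : ℕ) [Fact p.Prime] (hp2 : p ≠ 2)
    (hD : ¬ IsSquare D) (hpD : ¬ ((p : ℤ) ∣ D))
    (hAB : A * B ≠ 0) (hABne : A ≠ B)
    (hG : A ^ 2 - 2 * A * B + B ^ 2 - 2 * A - 2 * B + 1 ≠ 0) :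
    ∃ t : Fin 5 → ℚ_[p], t ≠ 0 ∧
      (t 2) ^ 2 - (D : ℚ_[p]) * (t 3) ^ 2 - t 0 * t 1 = 0 ∧
      (t 2) ^ 2 - (D : ℚ_[p]) * (t 4) ^ 2 -
        (t 0 + (A : ℚ_[p]) * t 1) * (t 0 + (B : ℚ_[p]) * t 1) = 0 ∧
      ∃ u v : ℚ_[p],
        (u = t 0 ∨ u = t 1) ∧
        (v = t 0 + (A : ℚ_[p]) * t 1 ∨ v = t 0 + (B : ℚ_[p]) * t 1) ∧
        u * v ≠ 0 ∧
        ∃ x y : ℚ_[p], u * v = x ^ 2 - (D : ℚ_[p]) * y ^ 2 :=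
  stmt_4_general D A B p hp2 hpD
end

section
/- Let D be an integer, and let p ≠ 2 be a prime with p ∤ D such that D is not a square modulo p (so p is inert in ℚ(√D)). Let A, B be nonzero integers with A ≠ B, G(A,B) ≠ 0, ν_p(A) ≤ ν_p(B) and ν_p(A) even. Then the following are equivalent: (i) there exist a nonzero t ∈ ℚ_p⁵ with Q1(t) = Q2(t) = 0 and u ∈ {t0, t1}, v ∈ {t0 + A·t1, t0 + B·t1} with u·v ≠ 0 such that u·v ≠ x² − D·y² for all x, y ∈ ℚ_p (i.e., the evaluation of the Brauer class α on S^(D;A,B)(ℚ_p) is non-constant); (ii) ν_p(B − A) > ν_p(A) and B·D is a square in ℚ_p. -/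
/-!
Since `D` is a non-square unit mod `p`, `x² - D y²` is the norm form of the unramified quadratic
extension: it is anisotropic with `‖x² - D y²‖ = max ‖x‖² ‖y‖²`, and its nonzero values are
exactly the elements of even valuation. So the Brauer class is non-constant iff some point has
`v(u v)` odd.

On such a point, `t₀ t₁` and `(t₀ + A t₁)(t₀ + B t₁)` are norms, and comparing parities of
valuations shows that either one of `t₀ + A t₁`, `t₀ + B t₁` vanishes, or `t₀ ≈ -A t₁` with both
linear forms much smaller than `t₀`. Either way `v(B - A) > v(A)`, and `Q₁` then makes `A D` or
`B D` a square; both are, since `B / A ∈ 1 + pℤ_p` is a square. Conversely, writing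
`A = D σ²`, the point `(-A, 1, 0, σ, 0)` works when `v(B - A)` is odd, and a Hensel
perturbation `t₀ = p ^ (v(A) + 1) - A` works when it is even.
-/

open Polynomial

namespace PadicInt

variable {p : ℕ} [hp : Fact p.Prime]

lemma toZMod_eq_zero_iff (x : ℤ_[p]) : toZMod x = 0 ↔ ‖x‖ < 1 := by
  rw [← RingHom.mem_ker, ker_toZMod, IsLocalRing.mem_maximalIdeal, mem_nonunits]

lemma norm_sq_sub_eq_one {d : ℤ_[p]} (hd : ¬IsSquare (toZMod d)) (w : ℤ_[p]) :
    ‖w ^ 2 - d‖ = 1 := by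
  refine le_antisymm (norm_le_one _) (not_lt.mp fun h => hd ?_)
  rw [← toZMod_eq_zero_iff, map_sub, map_pow, sub_eq_zero] at h
  exact ⟨toZMod w, by rw [← h, sq]⟩

lemma exists_norm_sq_sub_mul_sq_sub_lt_one (hp2 : p ≠ 2) {d : ℤ_[p]}
    (hd : toZMod d ≠ 0) (c : ℤ_[p]) : ∃ x y : ℤ_[p], ‖x ^ 2 - d * y ^ 2 - c‖ < 1 := by
  have hcard : Fintype.card (ZMod p) % 2 = 1 := by
    rw [ZMod.card]; exact Nat.odd_iff.mp (hp.out.odd_of_ne_two hp2)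
  obtain ⟨a, b, hab⟩ := FiniteField.exists_root_sum_quadratic
    (f := X ^ 2 - C (toZMod c)) (g := -(C (toZMod d) * X ^ 2))
    (degree_X_pow_sub_C two_pos _) (by rw [degree_neg, degree_C_mul_X_pow 2 hd]; rfl) hcard
  obtain ⟨x, rfl⟩ := ZMod.ringHom_surjective toZMod a
  obtain ⟨y, rfl⟩ := ZMod.ringHom_surjective toZMod b
  refine ⟨x, y, (toZMod_eq_zero_iff _).mp ?_⟩
  simp only [eval_sub, eval_neg, eval_mul, eval_pow, eval_X, eval_C] at hab
  simp only [map_sub, map_mul, map_pow]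
  linear_combination hab

end PadicInt

namespace Padic

variable {p : ℕ} [hp : Fact p.Prime]

lemma valuation_eq_of_norm_eq {x y : ℚ_[p]} (hx : x ≠ 0) (hy : y ≠ 0) (h : ‖x‖ = ‖y‖) :
    x.valuation = y.valuation := by
  rw [norm_eq_zpow_neg_valuation hx, norm_eq_zpow_neg_valuation hy] at h
  have := zpow_right_injective₀ (by exact_mod_cast hp.out.pos)
    (by exact_mod_cast hp.out.one_lt.ne') h
  omega

lemma norm_lt_norm_iff_valuation_lt {x y : ℚ_[p]} (hx : x ≠ 0) (hy : y ≠ 0) :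
    ‖x‖ < ‖y‖ ↔ y.valuation < x.valuation := by
  rw [norm_eq_zpow_neg_valuation hx, norm_eq_zpow_neg_valuation hy,
    zpow_lt_zpow_iff_right₀ (by exact_mod_cast hp.out.one_lt), neg_lt_neg_iff]

lemma valuation_neg (x : ℚ_[p]) : (-x).valuation = x.valuation := by
  rcases eq_or_ne x 0 with rfl | hx
  · simp
  · exact valuation_eq_of_norm_eq (neg_ne_zero.mpr hx) hx (norm_neg x)

lemma le_valuation_sub {x y : ℚ_[p]} (hxy : x - y ≠ 0) :
    min x.valuation y.valuation ≤ (x - y).valuation := by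
  simpa [sub_eq_add_neg, valuation_neg] using
    le_valuation_add (x := x) (y := -y) (by simpa [sub_eq_add_neg] using hxy)

/-- The minimum of the valuations of `x`, `w` and `-(x + w)` is attained at least twice. -/
lemma valuation_eq_and_lt_valuation_add {x w : ℚ_[p]} (hx : x ≠ 0) (hw : w ≠ 0)
    (hxw : x + w ≠ 0) (hpar : Even (x.valuation + w.valuation))
    (hodd : ¬Even (x.valuation + (x + w).valuation)) :
    x.valuation = w.valuation ∧ x.valuation < (x + w).valuation := by
  have h1 := le_valuation_add hxw
  have h2 := le_valuation_sub (x := x + w) (y := w) (by simpa using hx)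
  have h3 := le_valuation_sub (x := x + w) (y := x) (by simpa using hw)
  simp only [add_sub_cancel_right, add_sub_cancel_left] at h2 h3
  simp only [Int.even_iff] at hpar hodd
  omega

lemma isSquare_one_add (hp2 : p ≠ 2) {w : ℚ_[p]} (hw : ‖w‖ < 1) : IsSquare (1 + w) := by
  have h1w : ‖1 + w‖ ≤ 1 :=
    (nonarchimedean 1 w).trans (max_le norm_one.le hw.le)
  obtain ⟨c, hc⟩ : ∃ c : ℤ_[p], (c : ℚ_[p]) = 1 + w := ⟨⟨1 + w, h1w⟩, rfl⟩
  have h2 : ‖(2 : ℤ_[p])‖ = 1 := by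
    exact_mod_cast PadicInt.norm_natCast_eq_one_iff.mpr
      ((Nat.coprime_primes hp.out Nat.prime_two).mpr hp2)
  have hval : ‖(X ^ 2 - C c).aeval (1 : ℤ_[p])‖ = ‖w‖ := by
    rw [PadicInt.norm_def]
    simp [hc]
  have hder : ‖(derivative (X ^ 2 - C c)).aeval (1 : ℤ_[p])‖ = 1 := by
    simpa [one_add_one_eq_two] using h2
  obtain ⟨z, hz, -⟩ := hensels_lemma (p := p) (R := ℤ_[p]) (F := X ^ 2 - C c) (a := 1)
    (by rw [hval, hder, one_pow]; exact hw)
  refine ⟨z, ?_⟩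
  have : (z : ℚ_[p]) ^ 2 = 1 + w := by
    simpa [sub_eq_zero, hc] using congrArg ((↑) : ℤ_[p] → ℚ_[p]) hz
  rw [← this, sq]

lemma isSquare_div_of_norm_sub_lt (hp2 : p ≠ 2) {w z : ℚ_[p]} (h : ‖w - z‖ < ‖z‖) :
    IsSquare (w / z) := by
  have hz : z ≠ 0 := norm_pos_iff.mp ((norm_nonneg _).trans_lt h)
  have : w / z = 1 + (w - z) / z := by field_simp; ring
  rw [this]
  exact isSquare_one_add hp2 (by rwa [norm_div, div_lt_one (norm_pos_iff.mpr hz)])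

lemma isSquare_mul_iff_of_norm_sub_lt (hp2 : p ≠ 2) {w z : ℚ_[p]} (h : ‖w - z‖ < ‖z‖)
    (c : ℚ_[p]) : IsSquare (w * c) ↔ IsSquare (z * c) := by
  have hz : z ≠ 0 := norm_pos_iff.mp ((norm_nonneg _).trans_lt h)
  have hw : w ≠ 0 := norm_ne_zero_iff.mp ((norm_eq_of_norm_sub_lt_right h).trans_ne
    (norm_ne_zero_iff.mpr hz))
  have hwz := isSquare_div_of_norm_sub_lt hp2 h
  constructor
  · intro hwc
    rw [show z * c = w * c / (w / z) by field_simp]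
    exact hwc.div hwz
  · intro hzc
    rw [show w * c = w / z * (z * c) by field_simp]
    exact hwz.mul hzc

lemma exists_eq_mul_sq_of_isSquare_mul {q d : ℚ_[p]} (hd : d ≠ 0) (h : IsSquare (q * d)) :
    ∃ s, q = d * s ^ 2 := by
  obtain ⟨t, ht⟩ := h
  exact ⟨t / d, by field_simp; linear_combination ht⟩

lemma isSquare_neg_mul_of_norm_sq_lt (hp2 : p ≠ 2) {w z s δ : ℚ_[p]} (h : w = z ^ 2 - δ * s ^ 2)
    (hz : ‖z‖ ^ 2 < ‖w‖) : IsSquare (-w * δ) := by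
  refine (isSquare_mul_iff_of_norm_sub_lt hp2 (w := δ * s ^ 2) ?_ δ).mp ⟨δ * s, by ring⟩
  rwa [norm_neg, show δ * s ^ 2 - -w = z ^ 2 by rw [h]; ring, norm_pow]

lemma isSquare_mul_iff_of_valuation_lt (hp2 : p ≠ 2) {a b : ℚ_[p]} (ha : a ≠ 0) (hab : a ≠ b)
    (h : a.valuation < (b - a).valuation) (c : ℚ_[p]) : IsSquare (b * c) ↔ IsSquare (a * c) :=
  isSquare_mul_iff_of_norm_sub_lt hp2
    ((norm_lt_norm_iff_valuation_lt (sub_ne_zero.mpr hab.symm) ha).mpr h) c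

lemma valuation_lt_valuation_sub_of_not_even {a b : ℚ_[p]} (hab : a ≠ b)
    (hval : a.valuation ≤ b.valuation) (heven : Even a.valuation)
    (hodd : ¬Even (b - a).valuation) : a.valuation < (b - a).valuation := by
  have := le_valuation_sub (sub_ne_zero.mpr hab.symm)
  simp only [Int.even_iff] at heven hodd
  omega

variable {d : ℤ_[p]}

lemma norm_coe_eq_one_of_not_isSquare (hd : ¬IsSquare (PadicInt.toZMod d)) :
    ‖(d : ℚ_[p])‖ = 1 := by
  simpa using PadicInt.norm_sq_sub_eq_one hd 0

/-- `x² - d y²` is the norm form of the unramified quadratic extension `ℚ_p(√d)`. -/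
lemma norm_sq_sub_mul_sq (hd : ¬IsSquare (PadicInt.toZMod d)) (x y : ℚ_[p]) :
    ‖x ^ 2 - d * y ^ 2‖ = max (‖x‖ ^ 2) (‖y‖ ^ 2) := by
  have hdy : ‖(d : ℚ_[p]) * y ^ 2‖ = ‖y‖ ^ 2 := by
    rw [norm_mul, norm_coe_eq_one_of_not_isSquare hd, one_mul, norm_pow]
  rcases ne_or_eq (‖x‖ ^ 2) (‖y‖ ^ 2) with hne | heq
  · rw [sub_eq_add_neg, IsUltrametricDist.norm_add_eq_max_of_norm_ne_norm, norm_neg, hdy, norm_pow]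
    rwa [norm_neg, hdy, norm_pow]
  rcases eq_or_ne y 0 with rfl | hy
  · simp_all
  have hxy : ‖x / y‖ ≤ 1 := by
    rw [norm_div, div_le_one (norm_pos_iff.mpr hy)]
    exact (pow_left_inj₀ (norm_nonneg x) (norm_nonneg y) two_ne_zero).mp heq |>.le
  obtain ⟨w, hw⟩ : ∃ w : ℤ_[p], (w : ℚ_[p]) = x / y := ⟨⟨x / y, hxy⟩, rfl⟩
  have := PadicInt.norm_sq_sub_eq_one hd w
  rw [PadicInt.norm_def] at this
  push_cast [hw] at this
  rw [← heq, max_self, heq, show x ^ 2 - d * y ^ 2 = y ^ 2 * ((x / y) ^ 2 - d) by field_simp,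
    norm_mul, this, norm_pow, mul_one]

lemma sq_sub_mul_sq_eq_zero_iff (hd : ¬IsSquare (PadicInt.toZMod d)) {x y : ℚ_[p]} :
    x ^ 2 - d * y ^ 2 = 0 ↔ x = 0 ∧ y = 0 := by
  rw [← norm_eq_zero, norm_sq_sub_mul_sq hd]
  constructor
  · intro h
    have hx := le_max_left (‖x‖ ^ 2) (‖y‖ ^ 2)
    have hy := le_max_right (‖x‖ ^ 2) (‖y‖ ^ 2)
    rw [h] at hx hy
    exact ⟨by simpa using hx, by simpa using hy⟩
  · rintro ⟨rfl, rfl⟩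
    simp

lemma even_valuation_sq_sub_mul_sq (hd : ¬IsSquare (PadicInt.toZMod d)) {x y : ℚ_[p]}
    (h : x ^ 2 - d * y ^ 2 ≠ 0) : Even (x ^ 2 - d * y ^ 2).valuation := by
  have key : ∀ w : ℚ_[p], ‖x ^ 2 - d * y ^ 2‖ = ‖w‖ ^ 2 → Even (x ^ 2 - d * y ^ 2).valuation := by
    intro w hw
    have hw0 : w ≠ 0 := by rintro rfl; simp_all
    rw [← norm_pow] at hw
    rw [valuation_eq_of_norm_eq h (pow_ne_zero 2 hw0) hw, valuation_pow]
    exact ⟨w.valuation, by push_cast; ring⟩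
  rcases max_choice (‖x‖ ^ 2) (‖y‖ ^ 2) with hm | hm
  · exact key x (by rw [norm_sq_sub_mul_sq hd, hm])
  · exact key y (by rw [norm_sq_sub_mul_sq hd, hm])

/-- Every element of even valuation is a value of the norm form: lift a representation of
the residue of its unit part, then correct by a square. -/
lemma exists_eq_sq_sub_mul_sq (hp2 : p ≠ 2) (hd : PadicInt.toZMod d ≠ 0) {z : ℚ_[p]}
    (hz : z ≠ 0) (he : Even z.valuation) : ∃ x y : ℚ_[p], z = x ^ 2 - d * y ^ 2 := by
  obtain ⟨k, hk⟩ := he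
  set π : ℚ_[p] := (p : ℚ_[p]) ^ k
  have hπ : π ≠ 0 := zpow_ne_zero _ (Nat.cast_ne_zero.mpr hp.out.ne_zero)
  have hp0 : (p : ℝ) ≠ 0 := Nat.cast_ne_zero.mpr hp.out.ne_zero
  have hc : ‖z / π ^ 2‖ = 1 := by
    rw [norm_div, norm_pow, norm_p_zpow, norm_eq_zpow_neg_valuation hz, hk,
      div_eq_one_iff_eq (pow_ne_zero _ (zpow_ne_zero _ hp0)), ← zpow_natCast, ← zpow_mul]
    ring_nf
  obtain ⟨c, hcz⟩ : ∃ c : ℤ_[p], (c : ℚ_[p]) = z / π ^ 2 := ⟨⟨z / π ^ 2, hc.le⟩, rfl⟩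
  obtain ⟨x, y, hxy⟩ := PadicInt.exists_norm_sq_sub_mul_sq_sub_lt_one hp2 hd c
  rw [PadicInt.norm_def] at hxy
  push_cast [hcz] at hxy
  replace hxy := hxy.trans_eq hc.symm
  have hN : (x : ℚ_[p]) ^ 2 - d * y ^ 2 ≠ 0 := by
    rw [← norm_ne_zero_iff, norm_eq_of_norm_sub_lt_right hxy, hc]
    exact one_ne_zero
  obtain ⟨s, hs⟩ := isSquare_div_of_norm_sub_lt hp2 hxy
  have hs0 : s ≠ 0 := by
    rintro rfl
    exact div_ne_zero hN (norm_ne_zero_iff.mp (hc.trans_ne one_ne_zero)) (by rw [hs, mul_zero])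
  refine ⟨π * x / s, π * y / s, ?_⟩
  have hzs : z * s ^ 2 = π ^ 2 * ((x : ℚ_[p]) ^ 2 - d * y ^ 2) := by
    field_simp at hs
    linear_combination -hs
  field_simp
  linear_combination hzs

lemma exists_eq_sq_sub_mul_sq_iff (hp2 : p ≠ 2) (hd : ¬IsSquare (PadicInt.toZMod d))
    {z : ℚ_[p]} (hz : z ≠ 0) : (∃ x y : ℚ_[p], z = x ^ 2 - d * y ^ 2) ↔ Even z.valuation := by
  refine ⟨?_, exists_eq_sq_sub_mul_sq hp2 (fun h => hd (h ▸ IsSquare.zero)) hz⟩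
  rintro ⟨x, y, rfl⟩
  exact even_valuation_sq_sub_mul_sq hd hz

lemma isSquare_mul_and_not_even_of_add_mul_eq_zero (hd : ¬IsSquare (PadicInt.toZMod d))
    {c c' x y s : ℚ_[p]} (hc : c ≠ 0) (hy : y ≠ 0) (hxc : x + c * y = 0)
    (hQ1 : x * y = -(d * s ^ 2)) (hv : x + c' * y ≠ 0)
    (hodd : ¬Even (x.valuation + (x + c' * y).valuation)) :
    IsSquare (c * d) ∧ ¬Even (c' - c).valuation := by
  have hx : x = -(c * y) := by linear_combination hxc
  have hcy : c * y ^ 2 = d * s ^ 2 := by rw [hx] at hQ1; linear_combination -hQ1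
  refine ⟨⟨d * s / y, by field_simp; linear_combination d * hcy⟩, ?_⟩
  have hcc' : c' - c ≠ 0 := fun h => hv (by linear_combination hxc + y * h)
  have hxy : Even (x * y).valuation := by
    have hQ1' : x * y = 0 ^ 2 - d * s ^ 2 := by rw [hQ1]; ring
    rw [hQ1']
    exact even_valuation_sq_sub_mul_sq hd
      (hQ1' ▸ mul_ne_zero (hx ▸ neg_ne_zero.mpr (mul_ne_zero hc hy)) hy)
  rw [hx, valuation_mul (neg_ne_zero.mpr (mul_ne_zero hc hy)) hy, valuation_neg,
    valuation_mul hc hy] at hxy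
  rw [hx, show -(c * y) + c' * y = (c' - c) * y by ring, valuation_neg, valuation_mul hc hy,
    valuation_mul hcc' hy] at hodd
  simp only [Int.even_iff] at hxy hodd ⊢
  omega

lemma valuation_lt_and_isSquare_of_ne_zero (hp2 : p ≠ 2) (hd : ¬IsSquare (PadicInt.toZMod d))
    {a b x y z s r : ℚ_[p]} (ha0 : 0 ≤ a.valuation) (ha : a ≠ 0) (hb : b ≠ 0) (hab : a ≠ b)
    (hval : a.valuation ≤ b.valuation) (heven : Even a.valuation)
    (hx : x ≠ 0) (hy : y ≠ 0) (hA : x + a * y ≠ 0) (hB : x + b * y ≠ 0)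
    (hQ1 : x * y = z ^ 2 - d * s ^ 2) (hQ2 : (x + a * y) * (x + b * y) = z ^ 2 - d * r ^ 2)
    (hoddA : ¬Even (x.valuation + (x + a * y).valuation))
    (hoddB : ¬Even (x.valuation + (x + b * y).valuation)) :
    a.valuation < (b - a).valuation ∧ IsSquare (a * d) := by
  have hxy : Even (x.valuation + y.valuation) := by
    rw [← valuation_mul hx hy, hQ1]
    exact even_valuation_sq_sub_mul_sq hd (hQ1 ▸ mul_ne_zero hx hy)
  obtain ⟨hxa, hxA⟩ := valuation_eq_and_lt_valuation_add hx (mul_ne_zero ha hy) hA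
    (by rw [valuation_mul ha hy]; simp only [Int.even_iff] at hxy heven ⊢; omega) hoddA
  rw [valuation_mul ha hy] at hxa
  have hxB : x.valuation < (x + b * y).valuation := by
    have := le_valuation_add hB
    rw [valuation_mul hb hy] at this
    simp only [Int.even_iff] at hoddB
    omega
  have hba : b - a ≠ 0 := sub_ne_zero.mpr hab.symm
  have hlt : a.valuation < (b - a).valuation := by
    have h := le_valuation_sub (x := x + b * y) (y := x + a * y)
      (by rw [show x + b * y - (x + a * y) = (b - a) * y by ring]; exact mul_ne_zero hba hy)
    rw [show x + b * y - (x + a * y) = (b - a) * y by ring, valuation_mul hba hy] at h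
    omega
  refine ⟨hlt, ?_⟩
  have hz : ‖z‖ ^ 2 < ‖x * y‖ :=
    calc ‖z‖ ^ 2 ≤ ‖(x + a * y) * (x + b * y)‖ := by
          rw [hQ2, norm_sq_sub_mul_sq hd]; exact le_max_left _ _
      _ < ‖x * y‖ := by
          rw [norm_lt_norm_iff_valuation_lt (mul_ne_zero hA hB) (mul_ne_zero hx hy),
            valuation_mul hA hB, valuation_mul hx hy]
          omega
  have hxyd := isSquare_neg_mul_of_norm_sq_lt hp2 hQ1 hz
  have hayd : IsSquare (a * y ^ 2 * d) := by
    refine (isSquare_mul_iff_of_norm_sub_lt hp2 (z := -(x * y)) ?_ d).mpr hxyd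
    rw [show a * y ^ 2 - -(x * y) = y * (x + a * y) by ring, norm_neg,
      norm_lt_norm_iff_valuation_lt (mul_ne_zero hy hA) (mul_ne_zero hx hy),
      valuation_mul hy hA, valuation_mul hx hy]
    omega
  have := hayd.div (IsSquare.sq y)
  rwa [mul_right_comm, mul_div_cancel_right₀ _ (pow_ne_zero 2 hy)] at this

lemma ne_zero_and_not_even_of_not_even (hd : ¬IsSquare (PadicInt.toZMod d))
    {a b x y z s r u v : ℚ_[p]} (ha : a ≠ 0) (hb : b ≠ 0) (heven : Even a.valuation)
    (hQ1 : x * y = z ^ 2 - d * s ^ 2) (hQ2 : (x + a * y) * (x + b * y) = z ^ 2 - d * r ^ 2)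
    (hu : u = x ∨ u = y) (hv : v = x + a * y ∨ v = x + b * y) (huv : u * v ≠ 0)
    (hodd : ¬Even (u * v).valuation) :
    x ≠ 0 ∧ y ≠ 0 ∧ ¬Even (x.valuation + v.valuation) := by
  obtain ⟨hu0, hv0⟩ := mul_ne_zero_iff.mp huv
  rw [valuation_mul hu0 hv0] at hodd
  have hy : y ≠ 0 := by
    rintro rfl
    obtain rfl : u = x := hu.resolve_right hu0
    obtain rfl : v = u := by rcases hv with rfl | rfl <;> ring
    exact hodd (Even.add_self _)
  have hx : x ≠ 0 := by
    rintro rfl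
    obtain rfl : u = y := hu.resolve_left hu0
    simp only [zero_add] at hQ2 hv
    have hAB : Even (a * u * (b * u)).valuation := by
      rw [hQ2]
      exact even_valuation_sq_sub_mul_sq hd
        (hQ2 ▸ mul_ne_zero (mul_ne_zero ha hu0) (mul_ne_zero hb hu0))
    rw [valuation_mul (mul_ne_zero ha hu0) (mul_ne_zero hb hu0), valuation_mul ha hu0,
      valuation_mul hb hu0] at hAB
    simp only [Int.even_iff] at hAB hodd heven
    rcases hv with rfl | rfl
    · rw [valuation_mul ha hu0] at hodd; omega
    · rw [valuation_mul hb hu0] at hodd; omega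
  have hxy : Even (x.valuation + y.valuation) := by
    rw [← valuation_mul hx hy, hQ1]
    exact even_valuation_sq_sub_mul_sq hd (hQ1 ▸ mul_ne_zero hx hy)
  refine ⟨hx, hy, ?_⟩
  rcases hu with rfl | rfl
  · exact hodd
  · simp only [Int.even_iff] at hodd hxy ⊢; omega

theorem valuation_lt_and_isSquare_of_not_even (hp2 : p ≠ 2)
    (hd : ¬IsSquare (PadicInt.toZMod d)) {a b x y z s r u v : ℚ_[p]} (ha0 : 0 ≤ a.valuation)
    (ha : a ≠ 0) (hb : b ≠ 0) (hab : a ≠ b) (hval : a.valuation ≤ b.valuation)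
    (heven : Even a.valuation)
    (hQ1 : x * y = z ^ 2 - d * s ^ 2) (hQ2 : (x + a * y) * (x + b * y) = z ^ 2 - d * r ^ 2)
    (hu : u = x ∨ u = y) (hv : v = x + a * y ∨ v = x + b * y) (huv : u * v ≠ 0)
    (hodd : ¬Even (u * v).valuation) :
    a.valuation < (b - a).valuation ∧ IsSquare (b * d) := by
  obtain ⟨hx, hy, hxv⟩ :=
    ne_zero_and_not_even_of_not_even hd ha hb heven hQ1 hQ2 hu hv huv hodd
  obtain ⟨-, hv0⟩ := mul_ne_zero_iff.mp huv
  by_cases hA : x + a * y = 0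
  · have hz : z = 0 := ((sq_sub_mul_sq_eq_zero_iff hd).mp (by rw [← hQ2, hA, zero_mul])).1
    obtain rfl : v = x + b * y := hv.resolve_left (by rintro rfl; exact hv0 hA)
    obtain ⟨hsq, hodd'⟩ := isSquare_mul_and_not_even_of_add_mul_eq_zero hd (s := s) ha hy hA
      (by rw [hQ1, hz]; ring) hv0 hxv
    have hlt := valuation_lt_valuation_sub_of_not_even hab hval heven hodd'
    exact ⟨hlt, (isSquare_mul_iff_of_valuation_lt hp2 ha hab hlt d).mpr hsq⟩
  by_cases hB : x + b * y = 0
  · have hz : z = 0 := ((sq_sub_mul_sq_eq_zero_iff hd).mp (by rw [← hQ2, hB, mul_zero])).1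
    obtain rfl : v = x + a * y := hv.resolve_right (by rintro rfl; exact hv0 hB)
    obtain ⟨hsq, hodd'⟩ := isSquare_mul_and_not_even_of_add_mul_eq_zero hd (s := s) hb hy hB
      (by rw [hQ1, hz]; ring) hv0 hxv
    rw [← valuation_neg, neg_sub] at hodd'
    exact ⟨valuation_lt_valuation_sub_of_not_even hab hval heven hodd', hsq⟩
  have hAB : Even ((x + a * y).valuation + (x + b * y).valuation) := by
    rw [← valuation_mul hA hB, hQ2]
    exact even_valuation_sq_sub_mul_sq hd (hQ2 ▸ mul_ne_zero hA hB)
  obtain ⟨hoddA, hoddB⟩ : ¬Even (x.valuation + (x + a * y).valuation) ∧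
      ¬Even (x.valuation + (x + b * y).valuation) := by
    simp only [Int.even_iff] at hAB hxv ⊢
    rcases hv with rfl | rfl <;> omega
  obtain ⟨hlt, hsq⟩ := valuation_lt_and_isSquare_of_ne_zero hp2 hd ha0 ha hb hab hval heven
    hx hy hA hB hQ1 hQ2 hoddA hoddB
  exact ⟨hlt, (isSquare_mul_iff_of_valuation_lt hp2 ha hab hlt d).mpr hsq⟩

/-- The witness is `x = P - a` with `P = p ^ (v(a) + 1)`: then `x + a = P` has odd valuation,
and `(x + a) (x + b) = P² (1 + (b - a) / P)` is a square because `v(b - a) ≥ v(a) + 2`. -/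
lemma exists_point_of_even_valuation_sub (hp2 : p ≠ 2) (hd0 : (d : ℚ_[p]) ≠ 0) {a b : ℚ_[p]}
    (ha0 : 0 ≤ a.valuation) (ha : a ≠ 0) (hab : a ≠ b) (heven : Even a.valuation)
    (hlt : a.valuation < (b - a).valuation) (hba : Even (b - a).valuation)
    (had : IsSquare (a * d)) :
    ∃ x z s r v : ℚ_[p], x = z ^ 2 - d * s ^ 2 ∧ (x + a) * (x + b) = z ^ 2 - d * r ^ 2 ∧
      (v = x + a ∨ v = x + b) ∧ v ≠ 0 ∧ ¬Even v.valuation := by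
  set P : ℚ_[p] := (p : ℚ_[p]) ^ (a.valuation + 1)
  have hP0 : P ≠ 0 := zpow_ne_zero _ (Nat.cast_ne_zero.mpr hp.out.ne_zero)
  have hPv : P.valuation = a.valuation + 1 := by simp [P]
  have hba0 : b - a ≠ 0 := sub_ne_zero.mpr hab.symm
  have hsmall : ‖(b - a) / P‖ < 1 := by
    rw [← norm_one (α := ℚ_[p]), norm_lt_norm_iff_valuation_lt (div_ne_zero hba0 hP0) one_ne_zero,
      div_eq_mul_inv, valuation_mul hba0 (inv_ne_zero hP0), valuation_inv, hPv, valuation_one]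
    simp only [Int.even_iff] at heven hba
    omega
  obtain ⟨w, hw⟩ := isSquare_one_add hp2 hsmall
  have hz : (P * w) ^ 2 = P * (P + (b - a)) := by
    rw [mul_pow, sq w, ← hw]; field_simp
  have hclose : ‖((P * w) ^ 2 - P + a) - a‖ < ‖a‖ := by
    have hPa : ‖P‖ < ‖a‖ := by rw [norm_lt_norm_iff_valuation_lt hP0 ha, hPv]; omega
    have hP1 : ‖P‖ ≤ 1 := by rw [norm_le_one_iff_val_nonneg, hPv]; omega
    have hba1 : ‖b - a‖ ≤ 1 := by rw [norm_le_one_iff_val_nonneg]; omega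
    have hunit : ‖P + (b - a) - 1‖ ≤ 1 := by
      rw [sub_eq_add_neg]
      refine (nonarchimedean _ _).trans (max_le ((nonarchimedean _ _).trans (max_le hP1 hba1)) ?_)
      rw [norm_neg, norm_one]
    rw [show (P * w) ^ 2 - P + a - a = P * (P + (b - a) - 1) by rw [hz]; ring, norm_mul]
    exact (mul_le_of_le_one_right (norm_nonneg P) hunit).trans_lt hPa
  obtain ⟨s, hs⟩ := exists_eq_mul_sq_of_isSquare_mul hd0
    ((isSquare_mul_iff_of_norm_sub_lt hp2 hclose d).mpr had)
  refine ⟨P - a, P * w, s, 0, P, by linear_combination -hs, by rw [hz]; ring,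
    Or.inl (by ring), hP0, ?_⟩
  rw [hPv]
  simp only [Int.even_iff] at heven ⊢
  omega

theorem exists_point_of_valuation_lt (hp2 : p ≠ 2) (hd : ¬IsSquare (PadicInt.toZMod d))
    {a b : ℚ_[p]} (ha0 : 0 ≤ a.valuation) (ha : a ≠ 0) (hab : a ≠ b)
    (heven : Even a.valuation) (hlt : a.valuation < (b - a).valuation)
    (hbd : IsSquare (b * d)) :
    ∃ x z s r v : ℚ_[p], x = z ^ 2 - d * s ^ 2 ∧ (x + a) * (x + b) = z ^ 2 - d * r ^ 2 ∧
      (v = x + a ∨ v = x + b) ∧ v ≠ 0 ∧ ¬Even v.valuation := by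
  have hd0 : (d : ℚ_[p]) ≠ 0 := by
    rw [← norm_ne_zero_iff, norm_coe_eq_one_of_not_isSquare hd]; exact one_ne_zero
  have had := (isSquare_mul_iff_of_valuation_lt hp2 ha hab hlt d).mp hbd
  by_cases hba : Even (b - a).valuation
  · exact exists_point_of_even_valuation_sub hp2 hd0 ha0 ha hab heven hlt hba had
  obtain ⟨s, hs⟩ := exists_eq_mul_sq_of_isSquare_mul hd0 had
  exact ⟨-a, 0, s, 0, b - a, by rw [hs]; ring, by ring, Or.inr (by ring),
    sub_ne_zero.mpr hab.symm, hba⟩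

end Padic

theorem stmt_6_general (D A B : ℤ) (p : ℕ) [Fact p.Prime] (hp2 : p ≠ 2)
    (hinert : ¬ IsSquare (D : ZMod p))
    (hA : A ≠ 0) (hB : B ≠ 0) (hABne : A ≠ B)
    (hval : padicValInt p A ≤ padicValInt p B) (heven : Even (padicValInt p A)) :
    ((∃ t : Fin 5 → ℚ_[p], t ≠ 0 ∧
        (t 2) ^ 2 - (D : ℚ_[p]) * (t 3) ^ 2 - t 0 * t 1 = 0 ∧
        (t 2) ^ 2 - (D : ℚ_[p]) * (t 4) ^ 2 -
          (t 0 + (A : ℚ_[p]) * t 1) * (t 0 + (B : ℚ_[p]) * t 1) = 0 ∧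
        ∃ u v : ℚ_[p],
          (u = t 0 ∨ u = t 1) ∧
          (v = t 0 + (A : ℚ_[p]) * t 1 ∨ v = t 0 + (B : ℚ_[p]) * t 1) ∧
          u * v ≠ 0 ∧
          ∀ x y : ℚ_[p], u * v ≠ x ^ 2 - (D : ℚ_[p]) * y ^ 2) ↔
      (padicValInt p A < padicValInt p (B - A) ∧ IsSquare ((B : ℚ_[p]) * (D : ℚ_[p])))) := by
  have hd : ¬IsSquare (PadicInt.toZMod (D : ℤ_[p])) := by rwa [map_intCast]
  have hA' : (A : ℚ_[p]) ≠ 0 := Int.cast_ne_zero.mpr hA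
  have hAB : (A : ℚ_[p]) ≠ B := Int.cast_injective.ne hABne
  have hvA : (A : ℚ_[p]).valuation = padicValInt p A := Padic.valuation_intCast A
  have hvBA : ((B : ℚ_[p]) - A).valuation = padicValInt p (B - A) := by
    rw [← Int.cast_sub, Padic.valuation_intCast]
  have hevenA : Even (A : ℚ_[p]).valuation := by rw [hvA]; exact_mod_cast heven
  have hA0 : 0 ≤ (A : ℚ_[p]).valuation := by rw [hvA]; positivity
  rw [← PadicInt.coe_intCast D]
  constructor
  · rintro ⟨t, -, hQ1, hQ2, u, v, hu, hv, huv, hnorm⟩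
    have hodd : ¬Even (u * v).valuation := fun he =>
      let ⟨x, y, h⟩ := (Padic.exists_eq_sq_sub_mul_sq_iff hp2 hd huv).mpr he
      hnorm x y h
    obtain ⟨hlt, hsq⟩ := Padic.valuation_lt_and_isSquare_of_not_even hp2 hd hA0 hA'
      (Int.cast_ne_zero.mpr hB) hAB (by simpa using hval) hevenA
      (sub_eq_zero.mp hQ1).symm (sub_eq_zero.mp hQ2).symm hu hv huv hodd
    rw [hvA, hvBA] at hlt
    exact ⟨by exact_mod_cast hlt, hsq⟩
  · rintro ⟨hlt, hsq⟩
    obtain ⟨x, z, s, r, v, hQ1, hQ2, hv, hv0, hodd⟩ := Padic.exists_point_of_valuation_lt hp2 hd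
      hA0 hA' hAB hevenA (by rw [hvA, hvBA]; exact_mod_cast hlt) hsq
    refine ⟨![x, 1, z, s, r], fun h => one_ne_zero (congrFun h 1), ?_, ?_, 1, v, Or.inr rfl,
      ?_, by simpa using hv0, fun x' y' h => ?_⟩
    · simp [hQ1]
    · simp [hQ2]
    · simpa using hv
    · exact hodd ((Padic.exists_eq_sq_sub_mul_sq_iff hp2 hd hv0).mp ⟨x', y', by simpa using h⟩)

theorem stmt_6 (D A B : ℤ) (p : ℕ) [Fact p.Prime] (hp2 : p ≠ 2)
    (hpD : ¬ ((p : ℤ) ∣ D)) (hinert : ¬ IsSquare (D : ZMod p))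
    (hA : A ≠ 0) (hB : B ≠ 0) (hABne : A ≠ B)
    (hG : A ^ 2 - 2 * A * B + B ^ 2 - 2 * A - 2 * B + 1 ≠ 0)
    (hval : padicValInt p A ≤ padicValInt p B) (heven : Even (padicValInt p A)) :
    ((∃ t : Fin 5 → ℚ_[p], t ≠ 0 ∧
        (t 2) ^ 2 - (D : ℚ_[p]) * (t 3) ^ 2 - t 0 * t 1 = 0 ∧
        (t 2) ^ 2 - (D : ℚ_[p]) * (t 4) ^ 2 -
          (t 0 + (A : ℚ_[p]) * t 1) * (t 0 + (B : ℚ_[p]) * t 1) = 0 ∧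
        ∃ u v : ℚ_[p],
          (u = t 0 ∨ u = t 1) ∧
          (v = t 0 + (A : ℚ_[p]) * t 1 ∨ v = t 0 + (B : ℚ_[p]) * t 1) ∧
          u * v ≠ 0 ∧
          ∀ x y : ℚ_[p], u * v ≠ x ^ 2 - (D : ℚ_[p]) * y ^ 2) ↔
      (padicValInt p A < padicValInt p (B - A) ∧ IsSquare ((B : ℚ_[p]) * (D : ℚ_[p])))) :=
  stmt_6_general D A B p hp2 hinert hA hB hABne hval heven
end

section
/- For every ε > 0 there exists a constant C_ε > 0 such that for every integer N ≥ 1, the number of pairs (A,B) ∈ ℤ² with |A| ≤ N, |B| ≤ N and such that −A·B is the square of a rational number is at most C_ε·N^{1+ε}. -/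
/-!
Off the coordinate axes, `-A * B` is a square only if `A` and `B` have opposite signs and
`|A| * |B|` is a square; then `|A| = g s²` and `|B| = g t²` with `g = gcd (|A|, |B|)`.
The triples `(g, s, t)` with `g s², g t² ≤ N` number at most
`∑_{g ≤ N} N / g ≤ N (1 + log N)`, and `log N ≤ N^ε / ε`.
-/

open Finset

theorem Nat.exists_eq_mul_sq_of_isSquare_mul {a b : ℕ} (ha : 0 < a) (h : IsSquare (a * b)) :
    ∃ g s t : ℕ, 0 < g ∧ a = g * s ^ 2 ∧ b = g * t ^ 2 := by
  obtain ⟨g, x, y, hg, hxy, rfl, rfl⟩ := Nat.exists_coprime' (Nat.gcd_pos_of_pos_left b ha)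
  obtain ⟨k, hk⟩ := h
  obtain ⟨m, rfl⟩ : g ∣ k :=
    (Nat.pow_dvd_pow_iff two_ne_zero).mp ⟨x * y, by rw [sq, ← hk]; ring⟩
  have hm : x * y = m ^ 2 :=
    Nat.eq_of_mul_eq_mul_left (pow_pos hg 2) (by linear_combination hk)
  obtain ⟨s, rfl⟩ := exists_eq_pow_of_mul_eq_pow (Nat.isUnit_iff.mpr hxy) hm
  obtain ⟨t, rfl⟩ := exists_eq_pow_of_mul_eq_pow (Nat.isUnit_iff.mpr hxy.symm)
    ((mul_comm _ _).trans hm)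
  exact ⟨g, s, t, hg, mul_comm _ _, mul_comm _ _⟩

theorem Nat.le_sqrt_div_of_mul_sq_le {g s N : ℕ} (hg : 0 < g) (h : g * s ^ 2 ≤ N) :
    s ≤ Nat.sqrt (N / g) := by
  rw [Nat.le_sqrt, Nat.le_div_iff_mul_le hg]
  linarith

theorem card_filter_isSquare_mul_le (N : ℕ) :
    #{p ∈ Icc 1 N ×ˢ Icc 1 N | IsSquare (p.1 * p.2)} ≤ ∑ g ∈ Icc 1 N, N / g := by
  set T := (Icc 1 N).sigma fun g => Icc 1 (Nat.sqrt (N / g)) ×ˢ Icc 1 (Nat.sqrt (N / g))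
  have hcover : {p ∈ Icc 1 N ×ˢ Icc 1 N | IsSquare (p.1 * p.2)} ⊆
      T.image fun x => (x.1 * x.2.1 ^ 2, x.1 * x.2.2 ^ 2) := by
    rintro ⟨a, b⟩ hp
    simp only [mem_filter, mem_product, mem_Icc] at hp
    obtain ⟨⟨⟨ha, haN⟩, hb, hbN⟩, hsq⟩ := hp
    obtain ⟨g, s, t, hg, rfl, rfl⟩ := Nat.exists_eq_mul_sq_of_isSquare_mul ha hsq
    refine mem_image.mpr ⟨⟨g, s, t⟩, ?_, rfl⟩
    have hs : 0 < s := Nat.pos_of_ne_zero (by rintro rfl; simp at ha)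
    have ht : 0 < t := Nat.pos_of_ne_zero (by rintro rfl; simp at hb)
    simp only [T, mem_sigma, mem_product, mem_Icc]
    exact ⟨⟨hg, le_trans (Nat.le_mul_of_pos_right g (by positivity)) haN⟩,
      ⟨hs, Nat.le_sqrt_div_of_mul_sq_le hg haN⟩, ht, Nat.le_sqrt_div_of_mul_sq_le hg hbN⟩
  calc _ ≤ #(T.image fun x => (x.1 * x.2.1 ^ 2, x.1 * x.2.2 ^ 2)) := card_le_card hcover
    _ ≤ #T := card_image_le
    _ = ∑ g ∈ Icc 1 N, Nat.sqrt (N / g) * Nat.sqrt (N / g) := by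
      simp only [T, card_sigma, card_product, Nat.card_Icc, Nat.add_sub_cancel]
    _ ≤ ∑ g ∈ Icc 1 N, N / g := sum_le_sum fun g _ => Nat.sqrt_le _

theorem Int.exists_eq_mul_natAbs_of_isSquare_neg_mul {A B : ℤ} (hA : A ≠ 0) (hB : B ≠ 0)
    (h : IsSquare (-(A * B))) :
    ∃ ε ∈ ({1, -1} : Finset ℤ), A = ε * A.natAbs ∧ B = -(ε * B.natAbs) := by
  obtain ⟨k, hk⟩ := h
  have hneg : A * B < 0 :=
    lt_of_le_of_ne (by linarith [mul_self_nonneg k]) (mul_ne_zero hA hB)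
  rcases mul_neg_iff.mp hneg with ⟨hA', hB'⟩ | ⟨hA', hB'⟩
  · exact ⟨1, by simp, by omega, by omega⟩
  · exact ⟨-1, by simp, by omega, by omega⟩

theorem card_filter_isSquare_neg_mul_le (N : ℕ) :
    #{q ∈ Icc (-N : ℤ) N ×ˢ Icc (-N : ℤ) N | IsSquare (-(q.1 * q.2))} ≤
      2 * (2 * N + 1) + 2 * #{p ∈ Icc 1 N ×ˢ Icc 1 N | IsSquare (p.1 * p.2)} := by
  set P := {p ∈ Icc 1 N ×ˢ Icc 1 N | IsSquare (p.1 * p.2)}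
  set I := Icc (-N : ℤ) N
  set E : Finset ℤ := {1, -1}
  set f := fun x : ℤ × ℕ × ℕ => (x.1 * x.2.1, -(x.1 * x.2.2))
  have hcover : {q ∈ I ×ˢ I | IsSquare (-(q.1 * q.2))} ⊆
      ({0} ×ˢ I ∪ I ×ˢ {0}) ∪ (E ×ˢ P).image f := by
    rintro ⟨A, B⟩ hq
    simp only [mem_filter, mem_product, I, mem_Icc] at hq
    obtain ⟨⟨⟨hA1, hA2⟩, hB1, hB2⟩, hsq⟩ := hq
    by_cases hA : A = 0
    · simp [hA, I, hB1, hB2]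
    by_cases hB : B = 0
    · simp [hB, I, hA1, hA2]
    obtain ⟨ε, hε, hAε, hBε⟩ := Int.exists_eq_mul_natAbs_of_isSquare_neg_mul hA hB hsq
    have hP : (A.natAbs, B.natAbs) ∈ P := by
      obtain ⟨k, hk⟩ := hsq
      simp only [P, mem_filter, mem_product, mem_Icc]
      refine ⟨⟨⟨by omega, by omega⟩, by omega, by omega⟩, k.natAbs, ?_⟩
      rw [← Int.natAbs_mul, ← Int.natAbs_mul, ← hk, Int.natAbs_neg]
    exact mem_union_right _ (mem_image.mpr ⟨⟨ε, _⟩, mem_product.mpr ⟨hε, hP⟩, by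
      simp only [f, ← hAε, ← hBε]⟩)
  calc _ ≤ #({0} ×ˢ I ∪ I ×ˢ {0}) + #((E ×ˢ P).image f) :=
      (card_le_card hcover).trans (card_union_le _ _)
    _ ≤ (#({0} ×ˢ I) + #(I ×ˢ {0})) + #(E ×ˢ P) :=
      add_le_add (card_union_le _ _) card_image_le
    _ = 2 * (2 * N + 1) + 2 * #P := by
      simp only [card_product, card_singleton, I, Int.card_Icc, E,
        card_pair (by norm_num : (1 : ℤ) ≠ -1)]
      omega

theorem Nat.cast_sum_div_le_mul_one_add_log (N : ℕ) :
    ((∑ g ∈ Icc 1 N, N / g : ℕ) : ℝ) ≤ N * (1 + Real.log N) := by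
  push_cast
  calc ∑ g ∈ Icc 1 N, ((N / g : ℕ) : ℝ) ≤ ∑ g ∈ Icc 1 N, (N : ℝ) * (g : ℝ)⁻¹ :=
        sum_le_sum fun g _ => Nat.cast_div_le.trans_eq (div_eq_mul_inv _ _)
    _ = N * (harmonic N : ℝ) := by rw [← mul_sum, harmonic_eq_sum_Icc]; push_cast; rfl
    _ ≤ N * (1 + Real.log N) := by gcongr; exact harmonic_le_one_add_log N

theorem natCard_isSquare_rat_neg_mul_eq_card_filter (N : ℕ) :
    Nat.card {q : ℤ × ℤ // |q.1| ≤ (N : ℤ) ∧ |q.2| ≤ (N : ℤ) ∧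
        ∃ r : ℚ, (-(q.1 * q.2) : ℚ) = r ^ 2} =
      #{q ∈ Icc (-N : ℤ) N ×ˢ Icc (-N : ℤ) N | IsSquare (-(q.1 * q.2))} := by
  rw [← Nat.card_eq_finsetCard]
  refine Nat.card_congr (Equiv.subtypeEquivRight fun q => ?_)
  rw [mem_filter, mem_product, mem_Icc, mem_Icc, ← abs_le, ← abs_le,
    ← Rat.isSquare_intCast_iff]
  simp [IsSquare, sq, eq_comm, and_assoc]

theorem stmt_7 (ε : ℝ) (hε : 0 < ε) :
    ∃ C : ℝ, 0 < C ∧ ∀ N : ℕ, 1 ≤ N →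
      (Nat.card {q : ℤ × ℤ // |q.1| ≤ (N : ℤ) ∧ |q.2| ≤ (N : ℤ) ∧
          ∃ r : ℚ, (-(q.1 * q.2) : ℚ) = r ^ 2} : ℝ) ≤
        C * (N : ℝ) ^ ((1 : ℝ) + ε) := by
  refine ⟨8 + 2 / ε, by positivity, fun N hN => ?_⟩
  rw [natCard_isSquare_rat_neg_mul_eq_card_filter]
  have hcount : #{q ∈ Icc (-N : ℤ) N ×ˢ Icc (-N : ℤ) N | IsSquare (-(q.1 * q.2))} ≤
      2 * (2 * N + 1) + 2 * ∑ g ∈ Icc 1 N, N / g :=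
    (card_filter_isSquare_neg_mul_le N).trans (by gcongr; exact card_filter_isSquare_mul_le N)
  have hN1 : (1 : ℝ) ≤ N := by exact_mod_cast hN
  have hpow : (N : ℝ) ^ ((1 : ℝ) + ε) = N * (N : ℝ) ^ ε := by
    rw [Real.rpow_add (by positivity), Real.rpow_one]
  have hNε : 1 ≤ (N : ℝ) ^ ε := Real.one_le_rpow hN1 hε.le
  have hlog : Real.log N ≤ (N : ℝ) ^ ε / ε := Real.log_natCast_le_rpow_div N hε
  calc _ ≤ (2 * (2 * N + 1) + 2 * (∑ g ∈ Icc 1 N, N / g : ℕ) : ℝ) := by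
        exact_mod_cast hcount
    _ ≤ 2 * (2 * N + 1) + 2 * (N * (1 + (N : ℝ) ^ ε / ε)) := by
      gcongr
      exact (Nat.cast_sum_div_le_mul_one_add_log N).trans (by gcongr)
    _ ≤ (8 + 2 / ε) * (N * (N : ℝ) ^ ε) := by
      calc _ = 6 * N + 2 + 2 / ε * (N * (N : ℝ) ^ ε) := by field_simp; ring
        _ ≤ 8 * (N * (N : ℝ) ^ ε) + 2 / ε * (N * (N : ℝ) ^ ε) := by gcongr; nlinarith
        _ = _ := by ring
    _ = (8 + 2 / ε) * (N : ℝ) ^ ((1 : ℝ) + ε) := by rw [hpow]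
end

section
/- For every ε > 0 there exists a constant C_ε > 0 such that for every integer D that is not a perfect square and every integer N ≥ 1, the number of pairs (A,B) ∈ ℤ² with |A| ≤ N, |B| ≤ N and such that D·((A+B−1)² − 4AB) is the square of a rational number is at most C_ε·|D|^ε·N^{1+ε}. -/
open Finset

/-! Since `(A + B - 1)² - 4AB = (B - A - 1)² - 4A`, writing `D = e²d` with `d` squarefree, the
condition says `(B - A - 1)² - 4A = d m²` for some `m ≥ 0`. So `(A, B)` is determined by the
lattice point `(x, m) = (B - A - 1, m)`, which lies in a box of size `O(N)` and satisfies
`|x² - d m²| ≤ 4N`. For `m ≥ 1` this forces `||x| - √d m| ≤ 4N/m` (with Mathlib's `√d = 0`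
for `d < 0`), so there are `O(N/m)` such `x`; summing over `m` gives `O(N log N)`, which is
`O_ε(N^{1+ε})` uniformly in `D`. -/

theorem Int.exists_sq_mul_squarefree {D : ℤ} (hD : D ≠ 0) :
    ∃ e d : ℤ, Squarefree d ∧ D = e ^ 2 * d := by
  obtain ⟨a, b, hab, ha⟩ := Nat.sq_mul_squarefree D.natAbs
  refine ⟨b, D.sign * a, ?_, ?_⟩
  · rw [← Int.squarefree_natAbs, Int.natAbs_mul, Int.natAbs_sign_of_ne_zero hD]
    simpa using ha
  · conv_lhs => rw [← Int.sign_mul_natAbs D, ← hab]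
    push_cast; ring

theorem Squarefree.exists_eq_mul_sq_of_isSquare {d e k : ℤ} (hd : Squarefree d) (he : e ≠ 0)
    (h : IsSquare (e ^ 2 * d * k)) : ∃ m : ℕ, k = d * m ^ 2 := by
  obtain ⟨s, hs⟩ := h
  obtain ⟨t, rfl⟩ : e ∣ s :=
    (Int.pow_dvd_pow_iff two_ne_zero).mp ⟨d * k, by rw [sq, ← hs]; ring⟩
  have hdk : d * k = t ^ 2 :=
    mul_left_cancel₀ (pow_ne_zero 2 he) (by rw [← mul_assoc, hs]; ring)
  obtain ⟨u, rfl⟩ : d ∣ t := (hd.dvd_pow_iff_dvd two_ne_zero).mp ⟨k, hdk.symm⟩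
  refine ⟨u.natAbs, mul_left_cancel₀ hd.ne_zero ?_⟩
  rw [hdk, Int.natCast_natAbs, sq_abs]; ring

theorem abs_abs_sub_sqrt_mul_le {d x m h : ℝ} (hd : 1 ≤ |d|) (hm : 0 < m)
    (hx : |x ^ 2 - d * m ^ 2| ≤ h) : |(|x| - √d * m)| ≤ h / m := by
  rw [le_div_iff₀ hm]
  rcases le_or_gt 0 d with hd0 | hd0
  · have hsd : 1 ≤ √d := Real.one_le_sqrt.mpr (by rwa [abs_of_nonneg hd0] at hd)
    have hfactor : |(|x| - √d * m)| * (|x| + √d * m) = |x ^ 2 - d * m ^ 2| := by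
      rw [← abs_of_nonneg (by positivity : 0 ≤ |x| + √d * m), ← abs_mul]
      congr 1
      rw [← sq_abs x]
      nlinarith [Real.sq_sqrt hd0]
    calc |(|x| - √d * m)| * m ≤ |(|x| - √d * m)| * (|x| + √d * m) := by
          gcongr; nlinarith [abs_nonneg x]
      _ ≤ h := hfactor ▸ hx
  · rw [Real.sqrt_eq_zero'.mpr hd0.le, zero_mul, sub_zero, abs_abs]
    rw [abs_of_neg hd0] at hd
    have := abs_le.mp hx
    nlinarith [sq_abs x, sq_nonneg (|x| - m)]

theorem Int.card_le_of_forall_abs_sub_le (s : Finset ℤ) {c r : ℝ} (hr : 0 ≤ r)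
    (h : ∀ x ∈ s, |(x : ℝ) - c| ≤ r) : (#s : ℝ) ≤ 2 * r + 1 := by
  have hsub : s ⊆ Icc ⌈c - r⌉ ⌊c + r⌋ := fun x hx => by
    have := abs_le.mp (h x hx)
    exact mem_Icc.mpr ⟨Int.ceil_le.mpr (by linarith), Int.le_floor.mpr (by linarith)⟩
  have hcard : ((#(Icc ⌈c - r⌉ ⌊c + r⌋) : ℤ) : ℝ) ≤ 2 * r + 1 := by
    rw [Int.card_Icc, Int.toNat_eq_max]
    push_cast
    refine max_le ?_ (by linarith)
    linarith [Int.floor_le (c + r), Int.le_ceil (c - r)]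
  exact le_trans (by exact_mod_cast card_le_card hsub) hcard

theorem Int.card_le_of_forall_abs_abs_sub_le (s : Finset ℤ) {c r : ℝ} (hr : 0 ≤ r)
    (h : ∀ x ∈ s, |(|(x : ℝ)| - c)| ≤ r) : (#s : ℝ) ≤ 2 * (2 * r + 1) := by
  have hpos := Int.card_le_of_forall_abs_sub_le ({x ∈ s | 0 ≤ x}) (c := c) hr fun x hx => by
    obtain ⟨hxs, hx0⟩ := mem_filter.mp hx
    have hx0' : (0 : ℝ) ≤ x := by exact_mod_cast hx0
    simpa [abs_of_nonneg hx0'] using h x hxs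
  have hneg := Int.card_le_of_forall_abs_sub_le ({x ∈ s | ¬ 0 ≤ x}) (c := -c) hr fun x hx => by
    obtain ⟨hxs, hx0⟩ := mem_filter.mp hx
    have hx0' : (x : ℝ) < 0 := by exact_mod_cast not_le.mp hx0
    have := h x hxs
    rwa [abs_of_neg hx0', show -(x : ℝ) - c = -((x : ℝ) - -c) by ring, abs_neg] at this
  rw [← card_filter_add_card_filter_not (s := s) (fun x => 0 ≤ x)]
  push_cast
  linarith

theorem card_filter_abs_sq_sub_mul_sq_le (s : Finset ℤ) {d : ℤ} (hd : d ≠ 0) {m : ℕ}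
    (hm : 0 < m) {h : ℤ} (hh : 0 ≤ h) :
    (#{x ∈ s | |x ^ 2 - d * (m : ℤ) ^ 2| ≤ h} : ℝ) ≤ 2 * (2 * (h / m) + 1) := by
  have hmR : (0 : ℝ) < m := by exact_mod_cast hm
  refine Int.card_le_of_forall_abs_abs_sub_le _ (c := √d * m) (by positivity) fun x hx => ?_
  refine abs_abs_sub_sqrt_mul_le (by exact_mod_cast Int.one_le_abs hd) hmR ?_
  exact_mod_cast (mem_filter.mp hx).2

noncomputable def nearConic (d : ℤ) (X : ℕ) (h : ℤ) : Finset (ℤ × ℕ) :=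
  {p ∈ Icc (-(X : ℤ)) X ×ˢ range (X + 1) | |p.1 ^ 2 - d * (p.2 : ℤ) ^ 2| ≤ h}

theorem card_nearConic_eq_sum (d : ℤ) (X : ℕ) (h : ℤ) :
    #(nearConic d X h) =
      ∑ m ∈ range (X + 1), #{x ∈ Icc (-(X : ℤ)) X | |x ^ 2 - d * (m : ℤ) ^ 2| ≤ h} := by
  simp only [nearConic, card_filter, sum_product_right]

theorem card_nearConic_le {d : ℤ} (hd : d ≠ 0) (X : ℕ) {h : ℤ} (hh : 0 ≤ h) :
    (#(nearConic d X h) : ℝ) ≤ 4 * X + 1 + 4 * h * harmonic X := by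
  set fiber : ℕ → Finset ℤ := fun m => {x ∈ Icc (-(X : ℤ)) X | |x ^ 2 - d * (m : ℤ) ^ 2| ≤ h}
  have hzero : #(fiber 0) ≤ 2 * X + 1 := (card_filter_le _ _).trans (by rw [Int.card_Icc]; omega)
  calc (#(nearConic d X h) : ℝ) = ∑ i ∈ range X, (#(fiber (i + 1)) : ℝ) + #(fiber 0) := by
        rw [card_nearConic_eq_sum, Nat.cast_sum, sum_range_succ']
    _ ≤ ∑ i ∈ range X, 2 * (2 * (h / ((i + 1 : ℕ) : ℝ)) + 1) + (2 * X + 1) := by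
        gcongr with i
        · exact card_filter_abs_sq_sub_mul_sq_le _ hd i.succ_pos hh
        · exact_mod_cast hzero
    _ = 4 * X + 1 + 4 * h * harmonic X := by
        simp only [harmonic, Rat.cast_sum, mul_add, sum_add_distrib, mul_sum, sum_const,
          card_range]
        push_cast
        ring_nf

def solutionSet (D : ℤ) (N : ℕ) : Set (ℤ × ℤ) :=
  {q | |q.1| ≤ N ∧ |q.2| ≤ N ∧
    ∃ r : ℚ, ((D * ((q.1 + q.2 - 1) ^ 2 - 4 * q.1 * q.2)) : ℚ) = r ^ 2}

/-- `(x, m) ↦ (A, B)` inverts `x = B - A - 1`, `x² - d m² = 4A`. -/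
theorem solutionSet_subset_image {d e : ℤ} (hd : Squarefree d) (he : e ≠ 0) (N : ℕ) :
    solutionSet (e ^ 2 * d) N ⊆ (nearConic d (2 * N + 1) (4 * N)).image
      fun p => ((p.1 ^ 2 - d * p.2 ^ 2) / 4, p.1 + 1 + (p.1 ^ 2 - d * p.2 ^ 2) / 4) := by
  rintro ⟨A, B⟩ ⟨hA, hB, r, hr⟩
  have hsq : IsSquare (e ^ 2 * d * ((B - A - 1) ^ 2 - 4 * A)) := by
    rw [← Rat.isSquare_intCast_iff]
    exact ⟨r, by push_cast at hr ⊢; rw [← sq, ← hr]; ring⟩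
  obtain ⟨m, hm⟩ := hd.exists_eq_mul_sq_of_isSquare he hsq
  have hA4 : (B - A - 1) ^ 2 - d * (m : ℤ) ^ 2 = 4 * A := by linarith
  have hd1 : 1 ≤ |d| := Int.one_le_abs hd.ne_zero
  rw [abs_le] at hA hB
  refine mem_image.mpr
    ⟨(B - A - 1, m), mem_filter.mpr ⟨mem_product.mpr ⟨?_, ?_⟩, ?_⟩, ?_⟩
  · exact mem_Icc.mpr ⟨by push_cast; omega, by push_cast; omega⟩
  · have hdm : |d| * (m : ℤ) ^ 2 ≤ (2 * N + 1) ^ 2 + 4 * N := by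
      rw [← abs_of_nonneg (sq_nonneg (m : ℤ)), ← abs_mul, abs_le]
      constructor <;> nlinarith
    have : (m : ℤ) < 2 * N + 2 := by nlinarith
    exact mem_range.mpr (by omega)
  · rw [hA4, abs_le]; constructor <;> linarith
  · simp only [hA4, Int.mul_ediv_cancel_left _ four_ne_zero]
    congr 1; ring

theorem harmonic_le_one_add_rpow_div (n : ℕ) {ε : ℝ} (hε : 0 < ε) :
    (harmonic n : ℝ) ≤ 1 + (n : ℝ) ^ ε / ε := by
  linarith [harmonic_le_one_add_log n, Real.log_le_rpow_div (Nat.cast_nonneg n) hε]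

theorem mul_harmonic_two_mul_add_one_le {N : ℕ} (hN : 1 ≤ N) {ε : ℝ} (hε : 0 < ε) :
    N * (harmonic (2 * N + 1) : ℝ) ≤ (1 + 3 ^ ε / ε) * (N : ℝ) ^ (1 + ε) := by
  have hN1 : (1 : ℝ) ≤ N := by exact_mod_cast hN
  have hNε : (N : ℝ) ^ (1 + ε) = N * (N : ℝ) ^ ε := by
    rw [Real.rpow_add (by positivity), Real.rpow_one]
  have hharm : (harmonic (2 * N + 1) : ℝ) ≤ 1 + 3 ^ ε / ε * (N : ℝ) ^ ε := by
    calc (harmonic (2 * N + 1) : ℝ) ≤ 1 + ((2 * N + 1 : ℕ) : ℝ) ^ ε / ε :=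
          harmonic_le_one_add_rpow_div _ hε
      _ ≤ 1 + (3 * N : ℝ) ^ ε / ε := by gcongr; push_cast; linarith
      _ = 1 + 3 ^ ε / ε * (N : ℝ) ^ ε := by
          rw [Real.mul_rpow (by norm_num) (by positivity)]; ring
  have hNNε : (N : ℝ) ≤ (N : ℝ) ^ (1 + ε) := Real.self_le_rpow_of_one_le hN1 (by linarith)
  calc N * (harmonic (2 * N + 1) : ℝ) ≤ N * (1 + 3 ^ ε / ε * (N : ℝ) ^ ε) := by gcongr
    _ = N + 3 ^ ε / ε * (N : ℝ) ^ (1 + ε) := by rw [hNε]; ring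
    _ ≤ (1 + 3 ^ ε / ε) * (N : ℝ) ^ (1 + ε) := by linarith

theorem stmt_8 (ε : ℝ) (hε : 0 < ε) :
    ∃ C : ℝ, 0 < C ∧ ∀ D : ℤ, ¬ IsSquare D → ∀ N : ℕ, 1 ≤ N →
      (Nat.card {q : ℤ × ℤ // |q.1| ≤ (N : ℤ) ∧ |q.2| ≤ (N : ℤ) ∧
          ∃ r : ℚ, ((D * ((q.1 + q.2 - 1) ^ 2 - 4 * q.1 * q.2)) : ℚ) = r ^ 2} : ℝ) ≤
        C * (|D| : ℝ) ^ ε * (N : ℝ) ^ ((1 : ℝ) + ε) := by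
  refine ⟨29 + 16 * 3 ^ ε / ε, by positivity, fun D hD N hN => ?_⟩
  have hD0 : D ≠ 0 := by rintro rfl; exact hD IsSquare.zero
  obtain ⟨e, d, hd, rfl⟩ := Int.exists_sq_mul_squarefree hD0
  have he : e ≠ 0 := by rintro rfl; simp at hD0
  have hcover : Nat.card (solutionSet (e ^ 2 * d) N) ≤ #(nearConic d (2 * N + 1) (4 * N)) := by
    rw [Nat.card_coe_set_eq]
    exact (Set.ncard_le_ncard (solutionSet_subset_image hd he N)).trans
      ((Set.ncard_coe_finset _).trans_le card_image_le)
  have hcount := card_nearConic_le hd.ne_zero (2 * N + 1) (by positivity : (0 : ℤ) ≤ 4 * N)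
  have hharm := mul_harmonic_two_mul_add_one_le hN hε
  have hN1 : (1 : ℝ) ≤ N := by exact_mod_cast hN
  have hNNε : (N : ℝ) ≤ (N : ℝ) ^ (1 + ε) := Real.self_le_rpow_of_one_le hN1 (by linarith)
  calc (Nat.card (solutionSet (e ^ 2 * d) N) : ℝ) ≤ #(nearConic d (2 * N + 1) (4 * N)) := by
        exact_mod_cast hcover
    _ ≤ (29 + 16 * 3 ^ ε / ε) * 1 * (N : ℝ) ^ (1 + ε) := by
        push_cast at hcount
        linear_combination hcount + 16 * hharm + 13 * hNNε + 5 * hN1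
    _ ≤ _ := by
        gcongr
        exact Real.one_le_rpow (by exact_mod_cast Int.one_le_abs hD0) hε.le
end
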